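/- arXiv:2008.10315 — 6 statements merged into one kernel-verified Lean document; each statement's English description precedes it below -/
import Mathlib

section
/- Let d ≥ 2 and let U ⊆ A_d be a base-point-free monomial subspace of codimension 1. Then: (i) if d = 2, codim U² ∈ {0, 2}; (ii) if d ≥ 3, codim U² ∈ {0, 1}. -/
/-!
Write `U = span {x^β : β ∈ S}`; then `U²` is spanned by the monomials with exponents in `S + S`,
so both codimensions count missing exponents. Codimension one means that `S` consists of all
degree-`d` exponents but one, `α`, and base-point-freeness means that `α` is not a pure power
`d • eᵢ`. An exponent `μ` of degree `2d` is missed by `S + S` exactly when every splitting of `μ`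
into two degree-`d` halves uses `α`. Exchanging a unit between the halves shows that this forces
`α = e_l + (d-1) e_k` and `μ = e_l + (2d-1) e_k` with `k ≠ l`, and such a `μ` is indeed missed.
For `d ≥ 3` the pair `(k, l)` is determined by `α`, so at most one `μ` is missed; for `d = 2` we
have `α = eᵢ + eⱼ`, whose two orderings give exactly two missed exponents.
-/

open MvPolynomial Module

noncomputable section

abbrev PolyR (n : ℕ) := MvPolynomial (Fin n) ℂ

def formSpace (n d : ℕ) : Submodule ℂ (PolyR n) :=
  homogeneousSubmodule (Fin n) ℂ d

/-- Codimension of a subspace `U` inside the space of degree-`d` forms. -/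
def vcodim (n d : ℕ) (U : Submodule ℂ (PolyR n)) : ℕ :=
  finrank ℂ (formSpace n d) - finrank ℂ U

/-- `U` is base-point-free: the only common zero of its members in `ℂⁿ` is `0`. -/
def IsBPF (n : ℕ) (U : Submodule ℂ (PolyR n)) : Prop :=
  ∀ x : Fin n → ℂ, (∀ p ∈ U, eval x p = 0) → x = 0

/-- `m(n,d,k)`: maximum of `codim U²` over codimension-`k` subspaces `U ⊆ A(n)_d`. -/
def mMax (n d k : ℕ) : ℕ :=
  sSup { s | ∃ U : Submodule ℂ (PolyR n),
    U ≤ formSpace n d ∧ vcodim n d U = k ∧ vcodim n (2 * d) (U * U) = s }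

def linForm (n : ℕ) (c : Fin n → ℂ) : PolyR n := ∑ i, c i • X i

def colon (n d : ℕ) (U : Submodule ℂ (PolyR n)) (l : PolyR n) : Submodule ℂ (PolyR n) :=
  Submodule.comap (LinearMap.mulLeft ℂ l) U ⊓ formSpace n (d - 1)

end

/-- `U` is spanned by monomials. -/
def IsMonomialSubspace (n : ℕ) (U : Submodule ℂ (PolyR n)) : Prop :=
  ∃ S : Set (Fin n →₀ ℕ),
    U = Submodule.span ℂ ((fun α => (monomial α (1 : ℂ) : PolyR n)) '' S)


open MvPolynomial Module Finsupp Pointwise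

namespace Finsupp

variable {σ : Type*} {d : ℕ} {α β γ μ : σ →₀ ℕ}

theorem single_add_single_inj {k l k' l' : σ} {u v : ℕ} (hu : u ≠ 0) (hv : v ≠ 0)
    (huv : u ≠ v) : single l u + single k v = single l' u + single k' v ↔ l = l' ∧ k = k' := by
  rw [single_add_single_eq_single_add_single hu hv]
  constructor
  · rintro (h | ⟨h, -⟩ | ⟨h, -⟩)
    exacts [h, absurd h huv, absurd h (by omega)]
  · exact Or.inl

theorem exists_ne_apply_ne_zero_of_ne_single (hα : α.degree = d) {k : σ} (hk : α ≠ single k d) :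
    ∃ l ≠ k, α l ≠ 0 := by
  classical
  by_contra! h
  have hsingle : α = single k (α k) := by
    ext m
    by_cases hm : m = k
    · simp [hm]
    · simp [Ne.symm hm, h m hm]
  rw [hsingle, degree_single] at hα
  exact hk (hα ▸ hsingle)

theorem eq_single_add_single_of_degree_eq_two (hα : α.degree = 2) {i j : σ} (hij : i ≠ j)
    (hi : α i ≠ 0) (hj : α j ≠ 0) : α = single i 1 + single j 1 := by
  classical
  obtain ⟨r, rfl⟩ : ∃ r, α = single i 1 + single j 1 + r := by
    refine le_iff_exists_add.mp fun m => ?_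
    by_cases hm : m = i <;> by_cases hm' : m = j <;> simp_all <;> omega
  have : r.degree = 0 := by simp at hα; omega
  rw [(degree_eq_zero_iff r).mp this, add_zero]

def SplitsOnlyThrough (d : ℕ) (α μ : σ →₀ ℕ) : Prop :=
  ∀ β γ : σ →₀ ℕ, β.degree = d → γ.degree = d → β + γ = μ → β = α ∨ γ = α

theorem SplitsOnlyThrough.exists_add_eq (h : SplitsOnlyThrough d α μ) (hμ : μ.degree = 2 * d) :
    ∃ γ, γ.degree = d ∧ α + γ = μ := by
  obtain ⟨β, hβμ, hβ⟩ := exists_le_degree_eq μ d (by omega)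
  obtain ⟨γ, rfl⟩ := le_iff_exists_add.mp hβμ
  have hγ : γ.degree = d := by rw [map_add] at hμ; omega
  rcases h β γ hβ hγ rfl with rfl | rfl
  · exact ⟨γ, hγ, rfl⟩
  · exact ⟨β, hβ, add_comm _ _⟩

/-- Moving a unit from coordinate `l` of `α` to coordinate `k`, and one from coordinate `k` of `γ`
to coordinate `l`, gives another splitting of `α + γ`; its first half is not `α`, so its second
half is. -/
theorem SplitsOnlyThrough.add_single_eq (h : SplitsOnlyThrough d α (α + γ)) (hα : α.degree = d)
    (hγ : γ.degree = d) {k l : σ} (hkl : k ≠ l) (hk : γ k ≠ 0) (hl : α l ≠ 0) :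
    γ + single l 1 = α + single k 1 := by
  classical
  obtain ⟨α', rfl⟩ := le_iff_exists_add.mp (single_le_iff.mpr (Nat.one_le_iff_ne_zero.mpr hl))
  obtain ⟨γ', rfl⟩ := le_iff_exists_add.mp (single_le_iff.mpr (Nat.one_le_iff_ne_zero.mpr hk))
  simp only [map_add, degree_single] at hα hγ
  rcases h (single k 1 + α') (single l 1 + γ') (by simp; omega) (by simp; omega)
      (by abel) with h' | h'
  · exact absurd (single_left_injective one_ne_zero (add_right_cancel h')) hkl
  · rw [← h']; abel

theorem SplitsOnlyThrough.exists_eq_single_add_single (h : SplitsOnlyThrough d α μ) (hd : d ≠ 0)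
    (hα : α.degree = d) (hpure : ∀ i, α ≠ single i d) (hμ : μ.degree = 2 * d) :
    ∃ k l, k ≠ l ∧ α = single l 1 + single k (d - 1) ∧ μ = single l 1 + single k (2 * d - 1) := by
  classical
  obtain ⟨γ, hγ, rfl⟩ := h.exists_add_eq hμ
  obtain ⟨k, hk⟩ : ∃ k, γ k ≠ 0 := by
    by_contra! h0
    exact hd (hγ ▸ (degree_eq_zero_iff γ).mpr (Finsupp.ext h0))
  obtain ⟨l, hlk, hl⟩ := exists_ne_apply_ne_zero_of_ne_single hα (hpure k)
  have hexch := h.add_single_eq hα hγ (Ne.symm hlk) hk hl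
  have hγk : γ = single k (γ k) := by
    ext m
    by_cases hmk : m = k
    · simp [hmk]
    rw [single_apply, if_neg (Ne.symm hmk)]
    by_contra hm
    obtain ⟨l', hl'm, hl'⟩ := exists_ne_apply_ne_zero_of_ne_single hα (hpure m)
    have h₁ := DFunLike.congr_fun hexch k
    have h₂ := DFunLike.congr_fun (h.add_single_eq hα hγ (Ne.symm hl'm) hm hl') k
    simp only [coe_add, Pi.add_apply, single_eq_same, single_eq_of_ne' hlk,
      single_eq_of_ne' hmk] at h₁ h₂
    omega
  rw [hγk, degree_single] at hγ
  rw [hγ] at hγk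
  have hαeq : α = single l 1 + single k (d - 1) := by
    ext m
    have := DFunLike.congr_fun hexch m
    rw [hγk] at this
    simp only [coe_add, Pi.add_apply, single_apply] at this ⊢
    split_ifs at this ⊢ <;> omega
  refine ⟨k, l, Ne.symm hlk, hαeq, ?_⟩
  rw [hαeq, hγk, add_assoc, ← single_add]
  congr 2
  omega

theorem splitsOnlyThrough_single_add_single {k l : σ} (hkl : k ≠ l) :
    SplitsOnlyThrough d (single l 1 + single k (d - 1)) (single l 1 + single k (2 * d - 1)) := by
  classical
  suffices key : ∀ β γ : σ →₀ ℕ, β.degree = d → β l = 0 →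
      β + γ = single l 1 + single k (2 * d - 1) → γ = single l 1 + single k (d - 1) by
    intro β γ hβ hγ hsum
    have hl := DFunLike.congr_fun hsum l
    simp only [coe_add, Pi.add_apply, single_eq_same, single_eq_of_ne' hkl] at hl
    rcases (by omega : β l = 0 ∨ γ l = 0) with h0 | h0
    · exact Or.inr (key β γ hβ h0 hsum)
    · exact Or.inl (key γ β hγ h0 (by rwa [add_comm]))
  intro β γ hβ hβl hsum
  have hβk : β = single k (β k) := by
    ext m
    have := DFunLike.congr_fun hsum m
    by_cases hmk : m = k
    · simp [hmk]
    by_cases hml : m = l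
    · simp [hml, hβl, single_eq_of_ne' hkl]
    simp only [coe_add, Pi.add_apply, single_eq_of_ne' (Ne.symm hml),
      single_eq_of_ne' (Ne.symm hmk)] at this ⊢
    omega
  rw [hβk, degree_single] at hβ
  rw [hβk, hβ] at hsum
  refine add_left_cancel (a := single k d) ?_
  rw [hsum, add_left_comm, ← single_add]
  congr 2
  omega

def nearPureIndices (d : ℕ) (α : σ →₀ ℕ) : Set (σ × σ) :=
  {p | p.1 ≠ p.2 ∧ α = single p.2 1 + single p.1 (d - 1)}

theorem sdiff_add_eq_image_nearPureIndices (hd : d ≠ 0) (hα : α.degree = d)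
    (hpure : ∀ i, α ≠ single i d) :
    {μ : σ →₀ ℕ | μ.degree = 2 * d} \
        (({β | β.degree = d} \ {α}) + ({β | β.degree = d} \ {α})) =
      (fun p => single p.2 1 + single p.1 (2 * d - 1)) '' nearPureIndices d α := by
  ext μ
  constructor
  · rintro ⟨hμ, hnot⟩
    have h : SplitsOnlyThrough d α μ := fun β γ hβ hγ hsum => by
      by_contra! h
      exact hnot (hsum ▸ Set.add_mem_add ⟨hβ, h.1⟩ ⟨hγ, h.2⟩)
    obtain ⟨k, l, hkl, hαkl, rfl⟩ := h.exists_eq_single_add_single hd hα hpure hμ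
    exact ⟨(k, l), ⟨hkl, hαkl⟩, rfl⟩
  · rintro ⟨⟨k, l⟩, ⟨hkl, rfl⟩, rfl⟩
    constructor
    · change (single l 1 + single k (2 * d - 1)).degree = 2 * d
      rw [map_add, degree_single, degree_single]
      omega
    · rintro ⟨β, ⟨hβ, hβα⟩, γ, ⟨hγ, hγα⟩, hsum⟩
      rcases splitsOnlyThrough_single_add_single hkl β γ hβ hγ hsum with h | h
      exacts [hβα h, hγα h]

theorem ncard_sdiff_add_eq_ncard_nearPureIndices (hd : 2 ≤ d) (hα : α.degree = d)
    (hpure : ∀ i, α ≠ single i d) :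
    ({μ : σ →₀ ℕ | μ.degree = 2 * d} \
        (({β | β.degree = d} \ {α}) + ({β | β.degree = d} \ {α}))).ncard =
      (nearPureIndices d α).ncard := by
  rw [sdiff_add_eq_image_nearPureIndices (by omega) hα hpure]
  refine Set.ncard_image_of_injective _ fun p q h => ?_
  obtain ⟨h₂, h₁⟩ := (single_add_single_inj one_ne_zero (by omega) (by omega)).mp h
  exact Prod.ext h₁ h₂

theorem nearPureIndices_subsingleton (hd : 3 ≤ d) : (nearPureIndices d α).Subsingleton := by
  rintro p ⟨-, hp⟩ q ⟨-, hq⟩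
  obtain ⟨h₂, h₁⟩ := (single_add_single_inj one_ne_zero (by omega) (by omega)).mp (hp.symm.trans hq)
  exact Prod.ext h₁ h₂

theorem ncard_nearPureIndices_two (hα : α.degree = 2) (hpure : ∀ i, α ≠ single i 2) :
    (nearPureIndices 2 α).ncard = 2 := by
  obtain ⟨i, hi⟩ : ∃ i, α i ≠ 0 := by
    by_contra! h
    rw [(degree_eq_zero_iff α).mpr (by ext i; exact h i)] at hα
    exact absurd hα (by decide)
  obtain ⟨j, hji, hj⟩ := exists_ne_apply_ne_zero_of_ne_single hα (hpure i)
  have hαij := eq_single_add_single_of_degree_eq_two hα (Ne.symm hji) hi hj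
  have : nearPureIndices 2 α = {(j, i), (i, j)} := by
    ext ⟨k, l⟩
    simp only [nearPureIndices, hαij, Set.mem_ofPred_eq, Set.mem_insert_iff,
      Set.mem_singleton_iff, Prod.mk.injEq, Nat.reduceSub]
    rw [single_add_single_eq_single_add_single one_ne_zero one_ne_zero]
    grind
  rw [this, Set.ncard_pair (by simp [hji])]

end Finsupp

namespace MvPolynomial

variable {σ R K : Type*} [CommSemiring R] [Field K]

theorem finrank_restrictSupport (s : Set (σ →₀ ℕ)) :
    finrank K (restrictSupport K s) = s.ncard := by
  rw [finrank_eq_nat_card_basis (basisRestrictSupport K s), Nat.card_coe_set_eq]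

theorem homogeneousSubmodule_eq_restrictSupport (m : ℕ) :
    homogeneousSubmodule σ R m = restrictSupport R {α | α.degree = m} :=
  homogeneousSubmodule_eq_finsupp_supported σ R m

theorem subset_of_restrictSupport_le [Nontrivial R] {s t : Set (σ →₀ ℕ)}
    (h : restrictSupport R s ≤ restrictSupport R t) : s ⊆ t := fun α hα => by
  simpa using h ((monomial_mem_restrictSupport R).mpr (Or.inl hα) : monomial α (1 : R) ∈ _)

theorem eval_eq_zero_of_mem_restrictSupport {s : Set (σ →₀ ℕ)} {x : σ → R}
    (h : ∀ β ∈ s, ∃ m, x m = 0 ∧ β m ≠ 0) {p : MvPolynomial σ R}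
    (hp : p ∈ restrictSupport R s) : eval x p = 0 := by
  rw [eval_eq]
  refine Finset.sum_eq_zero fun β hβ => ?_
  obtain ⟨m, hxm, hβm⟩ := h β (hp hβ)
  rw [Finset.prod_eq_zero (Finsupp.mem_support_iff.mpr hβm) (by simp [hxm, hβm]), mul_zero]

end MvPolynomial

theorem vcodim_restrictSupport {n m : ℕ} {s : Set (Fin n →₀ ℕ)}
    (hs : s ⊆ {α | α.degree = m}) :
    vcodim n m (restrictSupport ℂ s) = ({α | α.degree = m} \ s).ncard := by
  have := Set.ncard_sdiff_add_ncard_of_subset hs (Finsupp.finite_of_degree_eq m)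
  rw [vcodim, formSpace, homogeneousSubmodule_eq_restrictSupport, finrank_restrictSupport,
    finrank_restrictSupport]
  omega

theorem IsBPF.single_mem {n d : ℕ} {S : Set (Fin n →₀ ℕ)} (hbpf : IsBPF n (restrictSupport ℂ S))
    (hS : S ⊆ {α | α.degree = d}) (i : Fin n) : single i d ∈ S := by
  by_contra hi
  have hzero := hbpf (Pi.single i 1) fun p => eval_eq_zero_of_mem_restrictSupport fun β hβ => by
    obtain ⟨m, hmi, hβm⟩ :=
      exists_ne_apply_ne_zero_of_ne_single (hS hβ) (ne_of_mem_of_not_mem hβ hi)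
    exact ⟨m, Pi.single_eq_of_ne hmi _, hβm⟩
  simpa using congrFun hzero i

theorem stmt3_general (n d : ℕ)
    (U : Submodule ℂ (PolyR n)) (hU : U ≤ formSpace n d)
    (hmon : IsMonomialSubspace n U) (hbpf : IsBPF n U)
    (hcodim : vcodim n d U = 1) :
    (d = 2 → vcodim n (2 * d) (U * U) = 0 ∨ vcodim n (2 * d) (U * U) = 2) ∧
    (3 ≤ d → vcodim n (2 * d) (U * U) = 0 ∨ vcodim n (2 * d) (U * U) = 1) := by
  obtain ⟨S, rfl⟩ := hmon
  rw [← restrictSupport_eq_span] at hU hbpf hcodim ⊢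
  rw [formSpace, homogeneousSubmodule_eq_restrictSupport] at hU
  have hS := subset_of_restrictSupport_le hU
  obtain ⟨α, hα⟩ := Set.ncard_eq_one.mp ((vcodim_restrictSupport hS).symm.trans hcodim)
  have hαS : α ∈ {β | β.degree = d} \ S := hα ▸ rfl
  have hpure : ∀ i, α ≠ single i d := fun i h => hαS.2 (h ▸ hbpf.single_mem hS i)
  obtain rfl : S = {β | β.degree = d} \ {α} := by rw [← hα, Set.sdiff_sdiff_cancel_left hS]
  have hSS : ({β | β.degree = d} \ {α}) + ({β | β.degree = d} \ {α}) ⊆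
      {μ : Fin n →₀ ℕ | μ.degree = 2 * d} := by
    rintro _ ⟨β, ⟨hβ : β.degree = d, -⟩, γ, ⟨hγ : γ.degree = d, -⟩, rfl⟩
    show (β + γ).degree = 2 * d
    rw [map_add, hβ, hγ, two_mul]
  rw [← restrictSupport_add, vcodim_restrictSupport hSS]
  refine ⟨fun hd2 => Or.inr ?_, fun hd3 => ?_⟩
  · subst hd2
    rw [ncard_sdiff_add_eq_ncard_nearPureIndices le_rfl hαS.1 hpure]
    exact ncard_nearPureIndices_two hαS.1 hpure
  · have hle := Set.ncard_le_one_iff_subsingleton.mpr (nearPureIndices_subsingleton (α := α) hd3)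
    rw [ncard_sdiff_add_eq_ncard_nearPureIndices (by omega) hαS.1 hpure]
    omega

theorem stmt3 (n d : ℕ) (hn : 2 ≤ n) (hd : 2 ≤ d)
    (U : Submodule ℂ (PolyR n)) (hU : U ≤ formSpace n d)
    (hmon : IsMonomialSubspace n U) (hbpf : IsBPF n U)
    (hcodim : vcodim n d U = 1) :
    (d = 2 → vcodim n (2 * d) (U * U) = 0 ∨ vcodim n (2 * d) (U * U) = 2) ∧
    (3 ≤ d → vcodim n (2 * d) (U * U) = 0 ∨ vcodim n (2 * d) (U * U) = 1) :=
  stmt3_general n d U hU hmon hbpf hcodim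
end

section
/- Let d ≥ 2 and let U ⊆ A_d be a base-point-free linear subspace of codimension 1. Then: (i) if d ≥ 3, codim U² ∈ {0, 1}; (ii) if d = 2, codim U² ≤ 2. -/
open MvPolynomial Module

/-!
Write `U = ker φ` for a functional `φ` on the forms of degree `d = k + 1`, let `f a = φ (x^a)` and
fix `v` with `φ v = 1`. A functional `μ` on the forms of degree `2d` that kills `U²` satisfies
`μ (x y) = φ x · ℓ y + ℓ x · φ y` with `ℓ y = μ (v y) - μ (v²) / 2 · φ y`, and `ℓ` determines `μ`.
In terms of the rows `fₘ = (f (m + eᵢ))ᵢ` and `ℓₘ` (for `|m| = k`) the formula says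
`fₘ ∧ ℓₘ' = fₘ' ∧ ℓₘ`, so `codim U²` is at most the dimension of the space of such `ℓ`.

If the rows `fₘ` span a line, `φ` is a multiple of the evaluation at a point, which is then a base
point of `U`. If they span at least three dimensions, the wedge relations force `ℓ = 0`. If they
span a plane, choose coordinates `p, q` on it: then `ℓₘ = M fₘ` for one traceless `2 × 2`
matrix `M`, which determines `ℓ`. That `ℓ` is a function of the exponent says that `M N` is
symmetric for every block `N = (f (m + eₐ + e_b))_{a, b ∈ {p, q}}`, `|m| = k - 1`. Each
independent block cuts the three-dimensional space of traceless matrices by one dimension, and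
there are two independent blocks when `k ≥ 2` and one when `k = 1`.
-/

open Finsupp

section Wedge

variable {ι K : Type*} [Field K]

def wedge (u v : ι → K) (i j : ι) : K := u i * v j - u j * v i

theorem mem_span_singleton_of_wedge_eq_zero {u v : ι → K} (hu : u ≠ 0) (h : wedge u v = 0) :
    v ∈ K ∙ u := by
  obtain ⟨p, hp⟩ := Function.ne_iff.mp hu
  refine Submodule.mem_span_singleton.mpr ⟨v p / u p, funext fun j => ?_⟩
  have hpj := congrFun₂ h p j
  simp only [wedge, Pi.zero_apply] at hpj hp
  simp only [Pi.smul_apply, smul_eq_mul]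
  field_simp
  linear_combination -hpj

theorem exists_eq_smul_of_not_linearIndependent {u v : ι → K} (hu : u ≠ 0)
    (h : ¬ LinearIndependent K ![u, v]) : ∃ t : K, v = t • u := by
  by_contra! H
  exact h ((LinearIndependent.pair_iff' hu).mpr fun t ht => H t ht.symm)

theorem exists_wedge_ne_zero {u v : ι → K} (h : LinearIndependent K ![u, v]) :
    ∃ i j, wedge u v i j ≠ 0 := by
  have hu : u ≠ 0 := by simpa using h.ne_zero 0
  by_contra! H
  obtain ⟨a, ha⟩ := Submodule.mem_span_singleton.mp
    (mem_span_singleton_of_wedge_eq_zero hu (funext₂ H))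
  exact (LinearIndependent.pair_iff' hu).mp h a ha

theorem mem_span_pair_of_wedge_eq {w₁ w₂ a b : ι → K} (hw : LinearIndependent K ![w₁, w₂])
    (h : wedge w₁ a = wedge w₂ b) : a ∈ Submodule.span K {w₁, w₂} := by
  obtain ⟨p, q, hpq⟩ := exists_wedge_ne_zero hw
  refine Submodule.mem_span_pair.mpr ⟨(w₂ q * a p - w₂ p * a q) / wedge w₁ w₂ p q,
    (w₁ p * a q - w₁ q * a p) / wedge w₁ w₂ p q, funext fun j => ?_⟩
  have E : ∀ i j, wedge w₁ a i j = wedge w₂ b i j := fun i j => congrFun₂ h i j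
  simp only [wedge] at E hpq ⊢
  simp only [Pi.add_apply, Pi.smul_apply, smul_eq_mul]
  rw [div_mul_eq_mul_div, div_mul_eq_mul_div, ← add_div, div_eq_iff hpq]
  linear_combination (w₂ p) * E q j - (w₂ q) * E p j + (w₂ j) * E p q

theorem eq_zero_of_wedge_eq_zero {ε ε' z : ι → K} {p q : ι} (hεp : ε p = 1) (hε'p : ε' p = 0)
    (hε'q : ε' q = 1) (h : wedge ε z = 0) (h' : wedge ε' z = 0) : z = 0 := by
  have hzp : z p = 0 := by simpa [wedge, hε'p, hε'q] using congrFun₂ h' q p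
  funext j
  simpa [wedge, hεp, hzp] using congrFun₂ h p j

theorem eq_zero_of_mem_span_singleton_of_mem_span_singleton {w₁ w₂ x : ι → K}
    (hw : LinearIndependent K ![w₁, w₂]) (h₁ : x ∈ K ∙ w₁) (h₂ : x ∈ K ∙ w₂) : x = 0 := by
  obtain ⟨a, rfl⟩ := Submodule.mem_span_singleton.mp h₁
  obtain ⟨b, hb⟩ := Submodule.mem_span_singleton.mp h₂
  have := (LinearIndependent.pair_iff.mp hw a (-b) (by rw [neg_smul, hb, add_neg_cancel])).1
  rw [this, zero_smul]

theorem LinearIndependent.pair_of_ne {ι' : Type*} {w : ι' → ι → K} (hw : LinearIndependent K w)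
    {i j : ι'} (hij : i ≠ j) : LinearIndependent K ![w i, w j] := by
  classical
  rw [LinearIndependent.pair_iff]
  intro s t hst
  have := linearIndependent_iff'.mp hw {i, j} (fun x => if x = i then s else t)
    (by simpa [Finset.sum_pair hij, hij.symm] using hst)
  exact ⟨by simpa using this i (by simp), by simpa [hij.symm] using this j (by simp)⟩

theorem LinearIndependent.mem_span_singleton_of_mem_span_pair {ι' : Type*} {w : ι' → ι → K}
    (hw : LinearIndependent K w) {i j l : ι'} (hij : i ≠ j) (hjl : j ≠ l)
    {x : ι → K} (h₁ : x ∈ Submodule.span K {w i, w j}) (h₂ : x ∈ Submodule.span K {w i, w l}) :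
    x ∈ K ∙ w i := by
  obtain ⟨a, b, rfl⟩ := Submodule.mem_span_pair.mp h₁
  have hdisj := hw.disjoint_span_image (s := {j}) (t := {i, l}) (by simp [hij.symm, hjl])
  rw [Set.image_singleton, Set.image_pair] at hdisj
  have hb : b • w j = 0 := Submodule.disjoint_def.mp hdisj _
    (Submodule.smul_mem _ _ (Submodule.subset_span rfl))
    (by simpa using Submodule.sub_mem _ h₂ (Submodule.smul_mem _ a
      (Submodule.subset_span (Set.mem_insert _ _))))
  rw [hb, add_zero]
  exact Submodule.smul_mem _ _ (Submodule.mem_span_singleton_self _)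

theorem exists_ne_ne_of_fin_three (i : Fin 3) : ∃ j l, i ≠ j ∧ i ≠ l ∧ j ≠ l := by
  fin_cases i
  exacts [⟨1, 2, by decide⟩, ⟨0, 2, by decide⟩, ⟨0, 1, by decide⟩]

/-- Each `uᵢ` lies in the planes `⟨wᵢ, wⱼ⟩` for `j ≠ i`, hence on the line `⟨wᵢ⟩`, and the
multipliers then satisfy `cᵢ + cⱼ = 0` for all `i ≠ j`. -/
theorem eq_zero_of_wedge_comm [NeZero (2 : K)] {w u : Fin 3 → ι → K} (hw : LinearIndependent K w)
    (hu : ∀ i j, wedge (w i) (u j) = wedge (w j) (u i)) : u = 0 := by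
  have hplane : ∀ i j, i ≠ j → u i ∈ Submodule.span K {w i, w j} := fun i j hij => by
    rw [Set.pair_comm]
    exact mem_span_pair_of_wedge_eq (hw.pair_of_ne hij.symm) (hu j i)
  have hline : ∀ i, ∃ c : K, u i = c • w i := by
    intro i
    obtain ⟨j, l, hij, hil, hjl⟩ := exists_ne_ne_of_fin_three i
    obtain ⟨c, hc⟩ := Submodule.mem_span_singleton.mp (hw.mem_span_singleton_of_mem_span_pair
      hij hjl (hplane i j hij) (hplane i l hil))
    exact ⟨c, hc.symm⟩
  choose c hc using hline
  have hsum : ∀ i j, i ≠ j → c i + c j = 0 := by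
    intro i j hij
    obtain ⟨p, q, hpq⟩ := exists_wedge_ne_zero (hw.pair_of_ne hij)
    have h := congrFun₂ (hu i j) p q
    simp only [hc, wedge, Pi.smul_apply, smul_eq_mul] at h hpq
    exact (mul_eq_zero.mp (by linear_combination h : (c i + c j) *
      (w i p * w j q - w i q * w j p) = 0)).resolve_right hpq
  funext i
  obtain ⟨j, l, hij, hil, hjl⟩ := exists_ne_ne_of_fin_three i
  have h2 : (2 : K) * c i = 0 := by
    linear_combination hsum i j hij + hsum i l hil - hsum j l hjl
  rw [hc, (mul_eq_zero.mp h2).resolve_left two_ne_zero, zero_smul, Pi.zero_apply]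

end Wedge

theorem eq_zero_and_eq_zero_of_det_ne_zero {K : Type*} [Field K] {a b c d x y : K}
    (hdet : a * d - b * c ≠ 0) (h₁ : a * x + b * y = 0) (h₂ : c * x + d * y = 0) :
    x = 0 ∧ y = 0 := by
  have hx : x * (a * d - b * c) = 0 := by linear_combination d * h₁ - b * h₂
  have hy : y * (a * d - b * c) = 0 := by linear_combination a * h₂ - c * h₁
  exact ⟨(mul_eq_zero.mp hx).resolve_right hdet, (mul_eq_zero.mp hy).resolve_right hdet⟩

theorem finrank_ker_mulVecLin_add_card {K : Type*} [Field K] {r n : ℕ} {v : Fin r → Fin n → K}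
    (hv : LinearIndependent K v) :
    Module.finrank K (LinearMap.ker (Matrix.of v).mulVecLin) + r = n := by
  have h := LinearMap.finrank_range_add_finrank_ker (Matrix.of v).mulVecLin
  have hrank : (Matrix.of v).rank = r := by
    rw [Matrix.rank_eq_finrank_span_row]
    exact (finrank_span_eq_card hv).trans (Fintype.card_fin r)
  rw [Module.finrank_fin_fun] at h
  rw [Matrix.rank] at hrank
  omega

section Exponents

variable {σ : Type*}

theorem exists_eq_add_single_of_degree_eq_succ {s : ℕ} {a : σ →₀ ℕ} (h : degree a = s + 1) :
    ∃ i m, degree m = s ∧ a = m + single i 1 := by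
  obtain ⟨i, hi⟩ : ∃ i, a i ≠ 0 := by
    by_contra! H
    rw [show a = 0 from Finsupp.ext H, map_zero] at h
    omega
  have hle : single i 1 ≤ a := Finsupp.single_le_iff.mpr (Nat.one_le_iff_ne_zero.mpr hi)
  refine ⟨i, a - single i 1, ?_, (tsub_add_cancel_of_le hle).symm⟩
  have h2 := congrArg degree (tsub_add_cancel_of_le hle)
  rw [map_add, degree_single, h] at h2
  omega

theorem exists_eq_add_of_degree_eq_add {t : ℕ} :
    ∀ {s : ℕ} {w : σ →₀ ℕ}, degree w = t + s → ∃ a b, degree a = t ∧ degree b = s ∧ w = a + b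
  | 0, w, h => ⟨w, 0, h, map_zero _, (add_zero w).symm⟩
  | s + 1, w, h => by
    obtain ⟨i, m, hm, rfl⟩ := exists_eq_add_single_of_degree_eq_succ (s := t + s) h
    obtain ⟨a, b, ha, hb, rfl⟩ := exists_eq_add_of_degree_eq_add hm
    exact ⟨a, b + single i 1, ha, by rw [map_add, hb, degree_single], add_assoc _ _ _⟩

end Exponents

section Exchange

variable {σ K : Type*} [Field K] {k : ℕ} {f : (σ →₀ ℕ) → K}

noncomputable def row (f : (σ →₀ ℕ) → K) (m : σ →₀ ℕ) (i : σ) : K := f (m + single i 1)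

noncomputable def exchangeSpace (k : ℕ) (f : (σ →₀ ℕ) → K) : Submodule K ((σ →₀ ℕ) → K) where
  carrier := {g | (∀ a, degree a ≠ k + 1 → g a = 0) ∧ ∀ m m', degree m = k → degree m' = k →
    wedge (row f m) (row g m') = wedge (row f m') (row g m)}
  add_mem' := by
    rintro g g' ⟨hg₀, hg⟩ ⟨hg₀', hg'⟩
    refine ⟨fun a ha => by simp [hg₀ a ha, hg₀' a ha], fun m m' hm hm' => funext₂ fun i j => ?_⟩
    have h := congrFun₂ (hg m m' hm hm') i j
    have h' := congrFun₂ (hg' m m' hm hm') i j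
    simp only [wedge, row, Pi.add_apply] at h h' ⊢
    linear_combination h + h'
  zero_mem' := ⟨fun _ _ => rfl, fun _ _ _ _ => funext₂ fun _ _ => by simp [wedge, row]⟩
  smul_mem' := by
    rintro c g ⟨hg₀, hg⟩
    refine ⟨fun a ha => by simp [hg₀ a ha], fun m m' hm hm' => funext₂ fun i j => ?_⟩
    have h := congrFun₂ (hg m m' hm hm') i j
    simp only [wedge, row, Pi.smul_apply, smul_eq_mul] at h ⊢
    linear_combination c * h

theorem eq_zero_of_row_eq_zero {g : (σ →₀ ℕ) → K} (hg : g ∈ exchangeSpace k f)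
    (h : ∀ m, degree m = k → row g m = 0) : g = 0 := by
  funext a
  by_cases ha : degree a = k + 1
  · obtain ⟨i, m, hm, rfl⟩ := exists_eq_add_single_of_degree_eq_succ ha
    exact congrFun (h m hm) i
  · exact hg.1 a ha

def IsPointEval (d : ℕ) (f : (σ →₀ ℕ) → K) : Prop :=
  ∃ (γ : K) (z : σ → K), ∀ a, degree a = d → f a = γ * a.prod fun i e => z i ^ e

theorem prod_pow_add_single (m : σ →₀ ℕ) (i : σ) (z : σ → K) :
    ((m + single i 1).prod fun j e => z j ^ e) = z i * m.prod fun j e => z j ^ e := by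
  rw [prod_add_index' (fun _ => pow_zero _) (fun j => pow_add (z j))]
  simp [prod_single_index, mul_comm]

/-- The multipliers `t` themselves have rows proportional to `z`, which drives the induction. -/
theorem exists_eq_mul_prod_of_row_eq_smul {z : σ → K} :
    ∀ (k : ℕ) {f t : (σ →₀ ℕ) → K}, (∀ m, degree m = k → row f m = t m • z) →
      ∃ γ : K, ∀ a, degree a = k + 1 → f a = γ * a.prod fun i e => z i ^ e
  | 0, f, t, h => ⟨t 0, fun a ha => by
      obtain ⟨i, m, hm, rfl⟩ := exists_eq_add_single_of_degree_eq_succ ha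
      rw [(degree_eq_zero_iff m).mp hm, zero_add]
      simpa [row, prod_single_index, mul_comm] using congrFun (h 0 (map_zero _)) i⟩
  | k + 1, f, t, h => by
    by_cases hz : z = 0
    · refine ⟨0, fun a ha => ?_⟩
      obtain ⟨i, m, hm, rfl⟩ := exists_eq_add_single_of_degree_eq_succ ha
      simpa [row, hz] using congrFun (h m hm) i
    obtain ⟨i₀, hi₀ : z i₀ ≠ 0⟩ := Function.ne_iff.mp hz
    have ht : ∀ m, degree m = k → row t m = (t (m + single i₀ 1) / z i₀) • z := by
      intro m hm
      funext j
      have h₁ := congrFun (h (m + single j 1) (by rw [map_add, hm, degree_single])) i₀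
      have h₂ := congrFun (h (m + single i₀ 1) (by rw [map_add, hm, degree_single])) j
      simp only [row, Pi.smul_apply, smul_eq_mul, add_right_comm m (single j 1)] at h₁ h₂ ⊢
      field_simp
      linear_combination h₂ - h₁
    obtain ⟨γ, hγ⟩ := exists_eq_mul_prod_of_row_eq_smul k ht
    refine ⟨γ, fun a ha => ?_⟩
    obtain ⟨i, m, hm, rfl⟩ := exists_eq_add_single_of_degree_eq_succ ha
    have := congrFun (h m hm) i
    simp only [row, Pi.smul_apply, smul_eq_mul] at this
    rw [this, hγ m hm, prod_pow_add_single]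
    ring

theorem isPointEval_of_forall_not_linearIndependent
    (h : ∀ m₁ m₂, degree m₁ = k → degree m₂ = k → ¬ LinearIndependent K ![row f m₁, row f m₂]) :
    IsPointEval (k + 1) f := by
  by_cases hz : ∀ m, degree m = k → row f m = 0
  · obtain ⟨γ, hγ⟩ := exists_eq_mul_prod_of_row_eq_smul (z := 0) k (f := f) (t := 0)
      fun m hm => by simp [hz m hm]
    exact ⟨γ, 0, hγ⟩
  obtain ⟨m₀, hm₀, hne⟩ : ∃ m₀, degree m₀ = k ∧ row f m₀ ≠ 0 := by simpa using hz
  have ht : ∀ m, ∃ t : K, degree m = k → row f m = t • row f m₀ := fun m => by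
    by_cases hm : degree m = k
    · obtain ⟨t, ht⟩ := exists_eq_smul_of_not_linearIndependent hne (h m₀ m hm₀ hm)
      exact ⟨t, fun _ => ht⟩
    · exact ⟨0, fun h => absurd h hm⟩
  choose t ht using ht
  obtain ⟨γ, hγ⟩ := exists_eq_mul_prod_of_row_eq_smul k fun m hm => ht m hm
  exact ⟨γ, _, hγ⟩

theorem exchangeSpace_eq_bot_of_linearIndependent [NeZero (2 : K)] {m : Fin 3 → σ →₀ ℕ}
    (hm : ∀ i, degree (m i) = k) (hli : LinearIndependent K fun i => row f (m i)) :
    exchangeSpace k f = ⊥ := by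
  refine (Submodule.eq_bot_iff _).mpr fun g hg => eq_zero_of_row_eq_zero hg fun m' hm' => ?_
  have hrows := eq_zero_of_wedge_comm hli fun i j => hg.2 (m i) (m j) (hm i) (hm j)
  have hline : ∀ i, row g m' ∈ K ∙ row f (m i) := fun i => by
    refine mem_span_singleton_of_wedge_eq_zero (hli.ne_zero i) ?_
    rw [hg.2 (m i) m' (hm i) hm', show row g (m i) = 0 from congrFun hrows i]
    funext a b
    simp [wedge]
  exact eq_zero_of_mem_span_singleton_of_mem_span_singleton
    (hli.pair_of_ne (by decide : (0 : Fin 3) ≠ 1)) (hline 0) (hline 1)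

structure RankTwoData (f : (σ →₀ ℕ) → K) (k : ℕ) where
  p : σ
  q : σ
  m₁ : σ →₀ ℕ
  m₂ : σ →₀ ℕ
  degree_m₁ : degree m₁ = k
  degree_m₂ : degree m₂ = k
  det_ne_zero : wedge (row f m₁) (row f m₂) p q ≠ 0
  row_mem : ∀ m, degree m = k → row f m ∈ Submodule.span K {row f m₁, row f m₂}

theorem exchangeSpace_eq_bot_or_nonempty_rankTwoData [NeZero (2 : K)]
    (hf : ¬ IsPointEval (k + 1) f) : exchangeSpace k f = ⊥ ∨ Nonempty (RankTwoData f k) := by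
  by_cases h₃ : ∃ m : Fin 3 → σ →₀ ℕ, (∀ i, degree (m i) = k) ∧
      LinearIndependent K fun i => row f (m i)
  · obtain ⟨m, hm, hli⟩ := h₃
    exact .inl (exchangeSpace_eq_bot_of_linearIndependent hm hli)
  obtain ⟨m₁, m₂, h₁, h₂, hli⟩ : ∃ m₁ m₂, degree m₁ = k ∧ degree m₂ = k ∧
      LinearIndependent K ![row f m₁, row f m₂] := by
    by_contra! H
    exact hf (isPointEval_of_forall_not_linearIndependent H)
  obtain ⟨p, q, hpq⟩ := exists_wedge_ne_zero hli
  refine .inr ⟨p, q, m₁, m₂, h₁, h₂, hpq, fun m hm => ?_⟩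
  by_contra hspan
  refine h₃ ⟨![m, m₁, m₂], fun i => by fin_cases i <;> assumption, ?_⟩
  have : LinearIndependent K ![row f m, row f m₁, row f m₂] :=
    linearIndependent_finCons.mpr ⟨hli, by simpa [Set.pair_comm] using hspan⟩
  convert this using 1
  funext i
  fin_cases i <;> rfl

end Exchange

noncomputable def secondCoeffs {σ K : Type*} (f : (σ →₀ ℕ) → K) (p q : σ) (m : σ →₀ ℕ) :
    Fin 3 → K :=
  ![f (m + single p 1 + single p 1), f (m + single p 1 + single q 1),
    f (m + single q 1 + single q 1)]

section SecondCoeffs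

variable {σ K : Type*} {f : (σ →₀ ℕ) → K} {p q : σ}

theorem secondCoeffs_add_single_p_one (m : σ →₀ ℕ) :
    secondCoeffs f p q (m + single p 1) 1 = secondCoeffs f p q (m + single q 1) 0 := by
  simp only [secondCoeffs, Matrix.cons_val_zero, Matrix.cons_val_one]
  congr 1
  abel

theorem secondCoeffs_add_single_p_two (m : σ →₀ ℕ) :
    secondCoeffs f p q (m + single p 1) 2 = secondCoeffs f p q (m + single q 1) 1 := by
  simp only [secondCoeffs, Matrix.cons_val_one, Matrix.cons_val_two, Matrix.head_cons,
    Matrix.tail_cons]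
  congr 1
  abel

/-- The blocks at `m + eₚ` and `m + e_q` share two entries. -/
theorem secondCoeffs_add_single_eq_zero [Field K] {m : σ →₀ ℕ} {N : Fin 3 → K} {t₁ t₂ : K}
    (hN : N 0 * N 2 - N 1 * N 1 ≠ 0) (h₁ : secondCoeffs f p q (m + single p 1) = t₁ • N)
    (h₂ : secondCoeffs f p q (m + single q 1) = t₂ • N) :
    secondCoeffs f p q (m + single p 1) = 0 ∧ secondCoeffs f p q (m + single q 1) = 0 := by
  have e₁ := secondCoeffs_add_single_p_one (f := f) (p := p) (q := q) m
  have e₂ := secondCoeffs_add_single_p_two (f := f) (p := p) (q := q) m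
  rw [h₁, h₂] at e₁ e₂
  simp only [Pi.smul_apply, smul_eq_mul] at e₁ e₂
  obtain ⟨ht₁, ht₂⟩ := eq_zero_and_eq_zero_of_det_ne_zero (a := N 1) (b := -N 0) (c := N 2)
    (d := -N 1) (x := t₁) (y := t₂) (fun h => hN (by linear_combination h))
    (by linear_combination e₁) (by linear_combination e₂)
  rw [h₁, h₂, ht₁, ht₂, zero_smul]
  exact ⟨rfl, rfl⟩

end SecondCoeffs

section RowsFactor

variable {σ K : Type*} [Field K] {k : ℕ} {f g : (σ →₀ ℕ) → K} {p q : σ}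

def RowsFactor (f g : (σ →₀ ℕ) → K) (k : ℕ) (p q : σ) (b b' : σ → K) : Prop :=
  ∀ m, degree m = k → row g m = row f m p • b + row f m q • b'

theorem RowsFactor.secondCoeffs_dotProduct {b b' : σ → K} (h : RowsFactor f g (k + 1) p q b b')
    {m : σ →₀ ℕ} (hm : degree m = k) :
    secondCoeffs f p q m ⬝ᵥ ![-b q, b p - b' q, b' p] = 0 := by
  have hp := congrFun (h (m + single q 1) (by rw [map_add, hm, degree_single])) p
  have hq := congrFun (h (m + single p 1) (by rw [map_add, hm, degree_single])) q
  simp only [row, Pi.add_apply, Pi.smul_apply, smul_eq_mul, add_right_comm m (single q 1)] at hp hq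
  simp only [dotProduct, secondCoeffs, Fin.sum_univ_three, Matrix.cons_val_zero,
    Matrix.cons_val_one, Matrix.cons_val]
  linear_combination hq - hp

theorem RowsFactor.apply_add_single {ε ε' : σ → K} (h : RowsFactor f f (k + 1) p q ε ε')
    {m : σ →₀ ℕ} (hm : degree m = k) (s : σ) :
    f (m + single s 1 + single p 1) =
        secondCoeffs f p q m 0 * ε s + secondCoeffs f p q m 1 * ε' s ∧
      f (m + single s 1 + single q 1) =
        secondCoeffs f p q m 1 * ε s + secondCoeffs f p q m 2 * ε' s := by
  have hp := congrFun (h (m + single p 1) (by rw [map_add, hm, degree_single])) s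
  have hq := congrFun (h (m + single q 1) (by rw [map_add, hm, degree_single])) s
  simp only [row, Pi.add_apply, Pi.smul_apply, smul_eq_mul] at hp hq
  simp only [secondCoeffs, Matrix.cons_val_zero, Matrix.cons_val_one, Matrix.cons_val_two,
    Matrix.head_cons, Matrix.tail_cons, add_right_comm m (single s 1)]
  rw [add_right_comm m (single q 1) (single p 1)] at hq
  exact ⟨hp, hq⟩

end RowsFactor

namespace RankTwoData

variable {σ K : Type*} [Field K] {k : ℕ} {f g : (σ →₀ ℕ) → K}

section

variable (P : RankTwoData f k)

noncomputable def det : K := wedge (row f P.m₁) (row f P.m₂) P.p P.q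

/- `P.fst f` and `P.snd f` are the vectors of the plane spanned by the rows of `f` with
coordinates `(1, 0)` and `(0, 1)` at `(p, q)`; `P.fst g` and `P.snd g` are their images under the
linear map `row f m ↦ row g m`. -/
noncomputable def fst (g : (σ →₀ ℕ) → K) : σ → K :=
  P.det⁻¹ • (row f P.m₂ P.q • row g P.m₁ - row f P.m₁ P.q • row g P.m₂)

noncomputable def snd (g : (σ →₀ ℕ) → K) : σ → K :=
  P.det⁻¹ • (row f P.m₁ P.p • row g P.m₂ - row f P.m₂ P.p • row g P.m₁)

theorem inv_det_mul :
    P.det⁻¹ * (row f P.m₁ P.p * row f P.m₂ P.q - row f P.m₁ P.q * row f P.m₂ P.p) = 1 :=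
  inv_mul_cancel₀ P.det_ne_zero

theorem fst_self_p : P.fst f P.p = 1 := by
  simp only [fst, Pi.smul_apply, Pi.sub_apply, smul_eq_mul]
  linear_combination P.inv_det_mul

theorem snd_self_p : P.snd f P.p = 0 := by
  simp only [snd, Pi.smul_apply, Pi.sub_apply, smul_eq_mul]
  ring

theorem snd_self_q : P.snd f P.q = 1 := by
  simp only [snd, Pi.smul_apply, Pi.sub_apply, smul_eq_mul]
  linear_combination P.inv_det_mul

theorem rowsFactor_self : RowsFactor f f k P.p P.q (P.fst f) (P.snd f) := by
  intro m hm
  obtain ⟨s, t, hst⟩ := Submodule.mem_span_pair.mp (P.row_mem m hm)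
  rw [← hst]
  funext j
  simp only [fst, snd, Pi.add_apply, Pi.smul_apply, Pi.sub_apply, smul_eq_mul]
  linear_combination (-(s * row f P.m₁ j + t * row f P.m₂ j)) * P.inv_det_mul

theorem fst_add_snd_eq_zero (hg : g ∈ exchangeSpace k f) : P.fst g P.p + P.snd g P.q = 0 := by
  have h := congrFun₂ (hg.2 P.m₁ P.m₂ P.degree_m₁ P.degree_m₂) P.p P.q
  simp only [fst, snd, wedge, Pi.smul_apply, Pi.sub_apply, smul_eq_mul] at h ⊢
  linear_combination P.det⁻¹ * h

theorem wedge_row_fst (hg : g ∈ exchangeSpace k f) {m : σ →₀ ℕ} (hm : degree m = k) :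
    wedge (row f m) (P.fst g) = wedge (P.fst f) (row g m) := by
  funext i j
  have h₁ := congrFun₂ (hg.2 m P.m₁ hm P.degree_m₁) i j
  have h₂ := congrFun₂ (hg.2 m P.m₂ hm P.degree_m₂) i j
  simp only [fst, wedge, Pi.smul_apply, Pi.sub_apply, smul_eq_mul] at h₁ h₂ ⊢
  linear_combination P.det⁻¹ * (row f P.m₂ P.q * h₁ - row f P.m₁ P.q * h₂)

theorem wedge_row_snd (hg : g ∈ exchangeSpace k f) {m : σ →₀ ℕ} (hm : degree m = k) :
    wedge (row f m) (P.snd g) = wedge (P.snd f) (row g m) := by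
  funext i j
  have h₁ := congrFun₂ (hg.2 m P.m₁ hm P.degree_m₁) i j
  have h₂ := congrFun₂ (hg.2 m P.m₂ hm P.degree_m₂) i j
  simp only [snd, wedge, Pi.smul_apply, Pi.sub_apply, smul_eq_mul] at h₁ h₂ ⊢
  linear_combination P.det⁻¹ * (row f P.m₁ P.p * h₂ - row f P.m₂ P.p * h₁)

theorem wedge_fst_snd (hg : g ∈ exchangeSpace k f) :
    wedge (P.fst f) (P.snd g) = wedge (P.snd f) (P.fst g) := by
  funext i j
  have h := congrFun₂ (hg.2 P.m₁ P.m₂ P.degree_m₁ P.degree_m₂) i j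
  simp only [fst, snd, wedge, Pi.smul_apply, Pi.sub_apply, smul_eq_mul] at h ⊢
  linear_combination P.det⁻¹ ^ 2 * (row f P.m₁ P.p * row f P.m₂ P.q -
    row f P.m₁ P.q * row f P.m₂ P.p) * h

theorem rowsFactor_of_mem (hg : g ∈ exchangeSpace k f) :
    RowsFactor f g k P.p P.q (P.fst g) (P.snd g) := by
  intro m hm
  have hrow : ∀ i, row f m i = row f m P.p * P.fst f i + row f m P.q * P.snd f i := fun i => by
    simpa using congrFun (P.rowsFactor_self m hm) i
  rw [← sub_eq_zero]
  refine eq_zero_of_wedge_eq_zero P.fst_self_p P.snd_self_p P.snd_self_q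
    (funext₂ fun i j => ?_) (funext₂ fun i j => ?_)
  · have hA := congrFun₂ (P.wedge_row_fst hg hm) i j
    have hC := congrFun₂ (P.wedge_fst_snd hg) i j
    simp only [wedge, Pi.sub_apply, Pi.add_apply, Pi.smul_apply, smul_eq_mul, Pi.zero_apply]
      at hA hC ⊢
    linear_combination -hA - row f m P.q * hC + P.fst g j * hrow i - P.fst g i * hrow j
  · have hB := congrFun₂ (P.wedge_row_snd hg hm) i j
    have hC := congrFun₂ (P.wedge_fst_snd hg) i j
    simp only [wedge, Pi.sub_apply, Pi.add_apply, Pi.smul_apply, smul_eq_mul, Pi.zero_apply]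
      at hB hC ⊢
    linear_combination -hB + row f m P.p * hC + P.snd g j * hrow i - P.snd g i * hrow j

end

section

variable (P : RankTwoData f (k + 1))

theorem apply_add_single_p {m : σ →₀ ℕ} (hm : degree m = k) (s : σ) :
    row f (m + single s 1) P.p =
      secondCoeffs f P.p P.q m 0 * P.fst f s + secondCoeffs f P.p P.q m 1 * P.snd f s :=
  (P.rowsFactor_self.apply_add_single hm s).1

theorem apply_add_single_q {m : σ →₀ ℕ} (hm : degree m = k) (s : σ) :
    row f (m + single s 1) P.q =
      secondCoeffs f P.p P.q m 1 * P.fst f s + secondCoeffs f P.p P.q m 2 * P.snd f s :=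
  (P.rowsFactor_self.apply_add_single hm s).2

/-- Such a vector is orthogonal to the `(p, q)`-coordinates of every row of `f`. -/
theorem eq_zero_of_secondCoeffs {x y : K}
    (h : ∀ m, degree m = k → secondCoeffs f P.p P.q m 0 * x + secondCoeffs f P.p P.q m 1 * y = 0 ∧
      secondCoeffs f P.p P.q m 1 * x + secondCoeffs f P.p P.q m 2 * y = 0) : x = 0 ∧ y = 0 := by
  have hrow : ∀ m, degree m = k + 1 → row f m P.p * x + row f m P.q * y = 0 := by
    intro m hm
    obtain ⟨s, m', hm', rfl⟩ := exists_eq_add_single_of_degree_eq_succ hm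
    rw [P.apply_add_single_p hm', P.apply_add_single_q hm']
    linear_combination P.fst f s * (h m' hm').1 + P.snd f s * (h m' hm').2
  exact eq_zero_and_eq_zero_of_det_ne_zero P.det_ne_zero (hrow _ P.degree_m₁) (hrow _ P.degree_m₂)

theorem row_eq_zero {b b' : σ → K} (hg : RowsFactor f g (k + 1) P.p P.q b b') (hp : b P.p = 0)
    (hp' : b' P.p = 0) (hq : b P.q = 0) (hq' : b' P.q = 0) {m : σ →₀ ℕ} (hm : degree m = k + 1) :
    row g m = 0 := by
  have hb : ∀ j, b j = 0 ∧ b' j = 0 := by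
    intro j
    refine P.eq_zero_of_secondCoeffs fun m hm => ?_
    have hmj : degree (m + single j 1) = k + 1 := by rw [map_add, hm, degree_single]
    have hmp : degree (m + single P.p 1) = k + 1 := by rw [map_add, hm, degree_single]
    have hmq : degree (m + single P.q 1) = k + 1 := by rw [map_add, hm, degree_single]
    have h₁ := congrFun (hg _ hmj) P.p
    have h₂ := congrFun (hg _ hmj) P.q
    have h₃ := congrFun (hg _ hmp) j
    have h₄ := congrFun (hg _ hmq) j
    simp only [row, Pi.add_apply, Pi.smul_apply, smul_eq_mul, hp, hp', hq, hq',
      add_right_comm m (single j 1)] at h₁ h₂ h₃ h₄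
    simp only [secondCoeffs, Matrix.cons_val_zero, Matrix.cons_val_one, Matrix.cons_val_two,
      Matrix.head_cons, Matrix.tail_cons, add_right_comm m (single P.q 1) (single P.p 1)] at h₄ ⊢
    exact ⟨by linear_combination h₁ - h₃, by linear_combination h₂ - h₄⟩
  funext j
  simp [hg m hm, (hb j).1, (hb j).2]

theorem exists_secondCoeffs_ne_zero : ∃ m, degree m = k ∧ secondCoeffs f P.p P.q m ≠ 0 := by
  by_contra! H
  exact one_ne_zero (P.eq_zero_of_secondCoeffs (x := 1) (y := 0) fun m hm => by simp [H m hm]).1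

theorem det_secondCoeffs_ne_zero {N : Fin 3 → K} {t : (σ →₀ ℕ) → K}
    (ht : ∀ m, degree m = k → secondCoeffs f P.p P.q m = t m • N) : N 0 * N 2 - N 1 * N 1 ≠ 0 := by
  intro hN
  apply P.det_ne_zero
  obtain ⟨s₁, n₁, hn₁, e₁⟩ := exists_eq_add_single_of_degree_eq_succ P.degree_m₁
  obtain ⟨s₂, n₂, hn₂, e₂⟩ := exists_eq_add_single_of_degree_eq_succ P.degree_m₂
  simp only [wedge, e₁, e₂, P.apply_add_single_p hn₁, P.apply_add_single_q hn₁,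
    P.apply_add_single_p hn₂, P.apply_add_single_q hn₂, ht n₁ hn₁, ht n₂ hn₂, Pi.smul_apply,
    smul_eq_mul]
  linear_combination t n₁ * t n₂ * (P.fst f s₁ * P.snd f s₂ - P.snd f s₁ * P.fst f s₂) * hN

/-- With `b = P.fst g` and `b' = P.snd g`, the matrix `[[b p, b' p], [b q, b' q]]` sends the
`(p, q)`-coordinates of the rows of `f` to those of `g`; these are its entries modulo the trace. -/
noncomputable def matrixCoords : exchangeSpace (k + 1) f →ₗ[K] Fin 3 → K where
  toFun g := ![-P.fst g P.q, P.fst g P.p - P.snd g P.q, P.snd g P.p]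
  map_add' g g' := by
    funext i
    fin_cases i <;> simp only [fst, snd, row, Submodule.coe_add, Pi.smul_apply, Pi.sub_apply,
      Pi.add_apply, smul_eq_mul, Fin.zero_eta, Fin.mk_one, Fin.reduceFinMk, Matrix.cons_val_zero,
      Matrix.cons_val_one, Matrix.cons_val] <;> ring
  map_smul' c g := by
    funext i
    fin_cases i <;> simp only [fst, snd, row, SetLike.val_smul, Pi.smul_apply, Pi.sub_apply,
      smul_eq_mul, RingHom.id_apply, Fin.zero_eta, Fin.mk_one, Fin.reduceFinMk,
      Matrix.cons_val_zero, Matrix.cons_val_one, Matrix.cons_val] <;> ring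

theorem matrixCoords_injective [NeZero (2 : K)] : Function.Injective P.matrixCoords := by
  refine (injective_iff_map_eq_zero _).mpr fun g hg => ?_
  have h₀ := congrFun hg 0
  have h₁ := congrFun hg 1
  have h₂ := congrFun hg 2
  simp only [matrixCoords, LinearMap.coe_mk, AddHom.coe_mk, Matrix.cons_val_zero,
    Matrix.cons_val_one, Matrix.cons_val, Pi.zero_apply, neg_eq_zero] at h₀ h₁ h₂
  have htr := P.fst_add_snd_eq_zero g.2
  have hp : P.fst g P.p = 0 := by
    have : (2 : K) * P.fst g P.p = 0 := by linear_combination htr + h₁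
    exact (mul_eq_zero.mp this).resolve_left two_ne_zero
  exact Subtype.ext (eq_zero_of_row_eq_zero g.2 fun m hm => P.row_eq_zero
    (P.rowsFactor_of_mem g.2) hp h₂ h₀ (by linear_combination htr - hp) hm)

theorem rank_exchangeSpace_le [NeZero (2 : K)] {r : ℕ} {m : Fin r → σ →₀ ℕ}
    (hm : ∀ i, degree (m i) = k) (hli : LinearIndependent K fun i => secondCoeffs f P.p P.q (m i)) :
    Module.rank K (exchangeSpace (k + 1) f) ≤ (3 - r : ℕ) := by
  have hdim := finrank_ker_mulVecLin_add_card hli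
  have hker : ∀ g, P.matrixCoords g ∈
      LinearMap.ker (Matrix.of fun i => secondCoeffs f P.p P.q (m i)).mulVecLin := fun g => by
    funext i
    exact (P.rowsFactor_of_mem g.2).secondCoeffs_dotProduct (hm i)
  have hinj : Function.Injective (P.matrixCoords.codRestrict _ hker) := fun g g' h =>
    P.matrixCoords_injective (congrArg Subtype.val h)
  have := Module.Finite.of_injective _ hinj
  have hle : Module.finrank K (exchangeSpace (k + 1) f) ≤ 3 - r :=
    (LinearMap.finrank_le_finrank_of_injective hinj).trans (by omega)
  rw [← Module.finrank_eq_rank]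
  exact_mod_cast hle

end

theorem secondCoeffs_add_single (P : RankTwoData f (k + 2)) {m : σ →₀ ℕ} (hm : degree m = k)
    (s : σ) : secondCoeffs f P.p P.q (m + single s 1) =
      P.fst f s • secondCoeffs f P.p P.q (m + single P.p 1) +
        P.snd f s • secondCoeffs f P.p P.q (m + single P.q 1) := by
  have hmp : degree (m + single P.p 1) = k + 1 := by rw [map_add, hm, degree_single]
  have hmq : degree (m + single P.q 1) = k + 1 := by rw [map_add, hm, degree_single]
  have h₁ := P.apply_add_single_p hmp s
  have h₂ := P.apply_add_single_q hmp s
  have h₃ := P.apply_add_single_q hmq s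
  rw [secondCoeffs_add_single_p_one] at h₁
  rw [secondCoeffs_add_single_p_two] at h₂
  rw [← secondCoeffs_add_single_p_two] at h₃
  simp only [row, add_right_comm m _ (single s 1)] at h₁ h₂ h₃
  funext i
  fin_cases i
  all_goals simp only [secondCoeffs, Fin.isValue, Matrix.cons_val, Matrix.cons_val_zero,
    Matrix.cons_val_one, Fin.zero_eta, Fin.mk_one, Fin.reduceFinMk, Matrix.smul_cons, smul_eq_mul,
    Matrix.smul_empty, Pi.add_apply] at h₁ h₂ h₃ ⊢
  · linear_combination h₁
  · linear_combination h₂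
  · linear_combination h₃

theorem exists_linearIndependent_secondCoeffs (P : RankTwoData f (k + 2)) :
    ∃ m m', degree m = k + 1 ∧ degree m' = k + 1 ∧
      LinearIndependent K ![secondCoeffs f P.p P.q m, secondCoeffs f P.p P.q m'] := by
  obtain ⟨m₀, hm₀, hne⟩ := P.exists_secondCoeffs_ne_zero
  by_contra! H
  have ht : ∀ m, ∃ t : K, degree m = k + 1 →
      secondCoeffs f P.p P.q m = t • secondCoeffs f P.p P.q m₀ := fun m => by
    by_cases hm : degree m = k + 1
    · obtain ⟨t, ht⟩ := exists_eq_smul_of_not_linearIndependent hne (H m₀ m hm₀ hm)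
      exact ⟨t, fun _ => ht⟩
    · exact ⟨0, fun h => absurd h hm⟩
  choose t ht using ht
  have hN := P.det_secondCoeffs_ne_zero ht
  obtain ⟨s, n, hn, rfl⟩ := exists_eq_add_single_of_degree_eq_succ hm₀
  have hdeg : ∀ l, degree (n + single l 1) = k + 1 := fun l => by rw [map_add, hn, degree_single]
  obtain ⟨hp, hq⟩ := secondCoeffs_add_single_eq_zero hN (ht _ (hdeg P.p)) (ht _ (hdeg P.q))
  apply hne
  rw [P.secondCoeffs_add_single hn, hp, hq, smul_zero, smul_zero, add_zero]

end RankTwoData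

section Bounds

variable {σ K : Type*} [Field K] [NeZero (2 : K)] {k : ℕ} {f : (σ →₀ ℕ) → K}

theorem rank_exchangeSpace_le_two (hf : ¬ IsPointEval (k + 2) f) :
    Module.rank K (exchangeSpace (k + 1) f) ≤ 2 := by
  obtain h | hP := exchangeSpace_eq_bot_or_nonempty_rankTwoData hf
  · rw [h, rank_bot]
    simp
  obtain ⟨P⟩ := hP
  obtain ⟨m, hm, hne⟩ := P.exists_secondCoeffs_ne_zero
  simpa using P.rank_exchangeSpace_le (m := ![m]) (fun _ => by simpa using hm)
    (linearIndependent_unique_iff.mpr hne)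

theorem rank_exchangeSpace_le_one (hf : ¬ IsPointEval (k + 3) f) :
    Module.rank K (exchangeSpace (k + 2) f) ≤ 1 := by
  obtain h | hP := exchangeSpace_eq_bot_or_nonempty_rankTwoData hf
  · rw [h, rank_bot]
    simp
  obtain ⟨P⟩ := hP
  obtain ⟨m, m', hm, hm', hli⟩ := P.exists_linearIndependent_secondCoeffs
  simpa using P.rank_exchangeSpace_le (m := ![m, m']) (fun i => by fin_cases i <;> assumption)
    (by convert hli using 1; funext i; fin_cases i <;> rfl)

end Bounds

theorem exists_dual_ker_eq {K V : Type*} [Field K] [AddCommGroup V] [Module K V]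
    [FiniteDimensional K V] {W : Submodule K V} (h : finrank K W + 1 = finrank K V) :
    ∃ φ : Module.Dual K V, LinearMap.ker φ = W := by
  have h₁ := Subspace.finrank_add_finrank_dualAnnihilator_eq W
  have : Nontrivial W.dualAnnihilator := (Module.finrank_pos_iff (R := K)).mp (by omega)
  obtain ⟨⟨φ, hφW⟩, hφ⟩ := exists_ne (0 : W.dualAnnihilator)
  have hφ₀ : φ ≠ 0 := fun h => hφ (Subtype.ext h)
  refine ⟨φ, (Submodule.eq_of_le_of_finrank_eq
    (fun x hx => (Submodule.mem_dualAnnihilator φ).mp hφW x hx) ?_).symm⟩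
  have := Module.Dual.finrank_ker_add_one_of_ne_zero hφ₀
  omega

theorem apply_mul_eq_of_apply_mul_sub_smul {R : Type*} [CommRing R] [Algebra ℂ R]
    {φ μ : R →ₗ[ℂ] ℂ} {v x y : R} (h : μ ((x - φ x • v) * (y - φ y • v)) = 0) :
    μ (x * y) =
      φ x * (μ (v * y) - μ (v * v) / 2 * φ y) + (μ (v * x) - μ (v * v) / 2 * φ x) * φ y := by
  have e : (x - φ x • v) * (y - φ y • v) =
      x * y - φ y • (v * x) - φ x • (v * y) + (φ x * φ y) • (v * v) := by
    simp only [Algebra.smul_def, map_mul]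
    ring
  rw [e, map_add, map_sub, map_sub, map_smul, map_smul, map_smul, smul_eq_mul, smul_eq_mul,
    smul_eq_mul] at h
  linear_combination h

theorem LinearMap.apply_eq_sum_coeff {R σ : Type*} [CommSemiring R]
    (L : MvPolynomial σ R →ₗ[R] R) (p : MvPolynomial σ R) :
    L p = ∑ a ∈ p.support, coeff a p * L (monomial a 1) := by
  conv_lhs => rw [p.as_sum, map_sum]
  refine Finset.sum_congr rfl fun a _ => ?_
  rw [show monomial a (coeff a p) = coeff a p • monomial a (1 : R) by
    rw [smul_monomial, smul_eq_mul, mul_one], map_smul, smul_eq_mul]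

section Forms

variable {n : ℕ}

instance (d : ℕ) : FiniteDimensional ℂ (formSpace n d) :=
  Module.Finite.iff_fg.mpr (homogeneousSubmodule_fg (Fin n) ℂ d)

theorem monomial_mem_formSpace {a : Fin n →₀ ℕ} {d : ℕ} (h : degree a = d) :
    monomial a (1 : ℂ) ∈ formSpace n d :=
  isHomogeneous_monomial 1 h

theorem mul_mem_formSpace {p q : PolyR n} {d e : ℕ} (hp : p ∈ formSpace n d)
    (hq : q ∈ formSpace n e) : p * q ∈ formSpace n (d + e) :=
  IsHomogeneous.mul hp hq

theorem mul_le_formSpace {U : Submodule ℂ (PolyR n)} {d : ℕ} (hU : U ≤ formSpace n d) :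
    U * U ≤ formSpace n (2 * d) :=
  Submodule.mul_le.mpr fun _ hp _ hq => two_mul d ▸ mul_mem_formSpace (hU hp) (hU hq)

theorem degree_of_mem_support {p : PolyR n} {d : ℕ} (hp : p ∈ formSpace n d)
    {a : Fin n →₀ ℕ} (ha : a ∈ p.support) : degree a = d := by
  rw [degree_eq_weight_one]
  exact hp (MvPolynomial.mem_support_iff.mp ha)

theorem vcodim_eq_finrank_dualAnnihilator {V : Submodule ℂ (PolyR n)} {d : ℕ}
    (hV : V ≤ formSpace n d) :
    vcodim n d V = finrank ℂ (V.comap (formSpace n d).subtype).dualAnnihilator := by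
  have h := Subspace.finrank_add_finrank_dualAnnihilator_eq (V.comap (formSpace n d).subtype)
  rw [(Submodule.comapSubtypeEquivOfLe hV).finrank_eq] at h
  rw [vcodim]
  omega

noncomputable def extendForms {d : ℕ} : Module.Dual ℂ (formSpace n d) →ₗ[ℂ] PolyR n →ₗ[ℂ] ℂ :=
  LinearMap.lcomp ℂ ℂ ((homogeneousComponent d).codRestrict (formSpace n d)
    (homogeneousComponent_isHomogeneous d))

theorem extendForms_of_mem {d : ℕ} (ψ : Module.Dual ℂ (formSpace n d)) {p : PolyR n}
    (hp : p ∈ formSpace n d) : extendForms ψ p = ψ ⟨p, hp⟩ :=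
  congrArg ψ (Subtype.ext (by
    show homogeneousComponent d p = p
    rw [homogeneousComponent_of_mem (m := d) hp, if_pos rfl]))

theorem extendForms_of_mem_of_ne {d e : ℕ} (ψ : Module.Dual ℂ (formSpace n d)) {p : PolyR n}
    (hp : p ∈ formSpace n e) (he : e ≠ d) : extendForms ψ p = 0 := by
  rw [← map_zero ψ]
  exact congrArg ψ (Subtype.ext (by
    show homogeneousComponent d p = 0
    rw [homogeneousComponent_of_mem (m := d) hp, if_neg he.symm]))

theorem eq_zero_of_extendForms {d : ℕ} {ψ : Module.Dual ℂ (formSpace n d)}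
    (h : ∀ p ∈ formSpace n d, extendForms ψ p = 0) : ψ = 0 :=
  LinearMap.ext fun x => by rw [← extendForms_of_mem ψ x.2, h x x.2, LinearMap.zero_apply]

theorem exists_extendForms_eq_zero_iff {U : Submodule ℂ (PolyR n)} {d : ℕ}
    (hU : U ≤ formSpace n d) (hcodim : vcodim n d U = 1) :
    ∃ φ : Module.Dual ℂ (formSpace n d), φ ≠ 0 ∧
      ∀ x ∈ formSpace n d, extendForms φ x = 0 ↔ x ∈ U := by
  have hdual := Subspace.finrank_add_finrank_dualAnnihilator_eq (U.comap (formSpace n d).subtype)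
  rw [vcodim_eq_finrank_dualAnnihilator hU] at hcodim
  obtain ⟨φ, hφ⟩ := exists_dual_ker_eq (W := U.comap (formSpace n d).subtype) (by omega)
  refine ⟨φ, ?_, fun x hx => by rw [extendForms_of_mem φ hx, ← LinearMap.mem_ker, hφ]; rfl⟩
  rintro rfl
  have h := congrArg (fun S : Submodule ℂ (formSpace n d) => finrank ℂ S) hφ
  rw [LinearMap.ker_zero, finrank_top] at h
  omega

theorem not_isPointEval_of_isBPF {U : Submodule ℂ (PolyR n)} {d : ℕ} (hd : d ≠ 0)
    (hU : U ≤ formSpace n d) (hbpf : IsBPF n U) {φ : Module.Dual ℂ (formSpace n d)} (hφ : φ ≠ 0)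
    (hφU : ∀ p ∈ U, extendForms φ p = 0) :
    ¬ IsPointEval d fun a => extendForms φ (monomial a 1) := by
  rintro ⟨γ, z, hγ⟩
  have heval : ∀ p ∈ formSpace n d, extendForms φ p = γ * eval z p := fun p hp => by
    rw [LinearMap.apply_eq_sum_coeff, eval_eq, Finset.mul_sum]
    refine Finset.sum_congr rfl fun a ha => ?_
    have h := hγ a (degree_of_mem_support hp ha)
    simp only at h
    rw [h, Finsupp.prod]
    ring
  refine hφ (eq_zero_of_extendForms fun p hp => ?_)
  by_cases hγ₀ : γ = 0
  · rw [heval p hp, hγ₀, zero_mul]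
  have hz : z = 0 := hbpf z fun q hq =>
    (mul_eq_zero.mp ((heval q (hU hq)).symm.trans (hφU q hq))).resolve_left hγ₀
  rw [heval p hp, hz, eval_zero, constantCoeff_eq,
    IsHomogeneous.coeff_eq_zero hp (by rw [map_zero]; exact Ne.symm hd), mul_zero]

end Forms

section Annihilator

variable {n d : ℕ}

noncomputable def exchangeOf (φ : Module.Dual ℂ (formSpace n d)) (v : PolyR n) :
    Module.Dual ℂ (formSpace n (2 * d)) →ₗ[ℂ] (Fin n →₀ ℕ) → ℂ where
  toFun μ a := extendForms μ (v * monomial a 1) -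
    extendForms μ (v * v) / 2 * extendForms φ (monomial a 1)
  map_add' μ μ' := by
    funext a
    simp only [map_add, LinearMap.add_apply, Pi.add_apply]
    ring
  map_smul' c μ := by
    funext a
    simp only [map_smul, LinearMap.smul_apply, smul_eq_mul, Pi.smul_apply, RingHom.id_apply]
    ring

variable {φ : Module.Dual ℂ (formSpace n d)} {μ : Module.Dual ℂ (formSpace n (2 * d))}
  {v : PolyR n}

theorem extendForms_monomial_add (hv : v ∈ formSpace n d) (hv₁ : extendForms φ v = 1)
    (hμ : ∀ x ∈ formSpace n d, ∀ y ∈ formSpace n d, extendForms φ x = 0 → extendForms φ y = 0 →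
      extendForms μ (x * y) = 0) {a b : Fin n →₀ ℕ} (ha : degree a = d) (hb : degree b = d) :
    extendForms μ (monomial (a + b) 1) =
      extendForms φ (monomial a 1) * exchangeOf φ v μ b +
        exchangeOf φ v μ a * extendForms φ (monomial b 1) := by
  have hker : ∀ x ∈ formSpace n d, x - extendForms φ x • v ∈ formSpace n d ∧
      extendForms φ (x - extendForms φ x • v) = 0 := fun x hx =>
    ⟨Submodule.sub_mem _ hx (Submodule.smul_mem _ _ hv), by
      rw [map_sub, map_smul, hv₁, smul_eq_mul, mul_one, sub_self]⟩
  obtain ⟨hxa, hφa⟩ := hker _ (monomial_mem_formSpace ha)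
  obtain ⟨hxb, hφb⟩ := hker _ (monomial_mem_formSpace hb)
  rw [show monomial (a + b) (1 : ℂ) = monomial a 1 * monomial b 1 by rw [monomial_mul, one_mul],
    apply_mul_eq_of_apply_mul_sub_smul (hμ _ hxa _ hxb hφa hφb)]
  rfl

theorem exchangeOf_mem_exchangeSpace {k : ℕ} {φ : Module.Dual ℂ (formSpace n (k + 1))}
    {μ : Module.Dual ℂ (formSpace n (2 * (k + 1)))} (hv : v ∈ formSpace n (k + 1))
    (hv₁ : extendForms φ v = 1)
    (hμ : ∀ x ∈ formSpace n (k + 1), ∀ y ∈ formSpace n (k + 1), extendForms φ x = 0 →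
      extendForms φ y = 0 → extendForms μ (x * y) = 0) :
    exchangeOf φ v μ ∈ exchangeSpace k fun a => extendForms φ (monomial a 1) := by
  refine ⟨fun a ha => ?_, fun m m' hm hm' => funext₂ fun i j => ?_⟩
  · have h₁ := extendForms_of_mem_of_ne μ (mul_mem_formSpace hv (monomial_mem_formSpace rfl))
      (by omega : k + 1 + degree a ≠ 2 * (k + 1))
    have h₂ := extendForms_of_mem_of_ne φ (monomial_mem_formSpace rfl) ha
    simp [exchangeOf, h₁, h₂]
  · have hdeg : ∀ {m : Fin n →₀ ℕ} (l : Fin n), degree m = k → degree (m + single l 1) = k + 1 :=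
      fun l hm => by rw [map_add, hm, degree_single]
    have h₁ := extendForms_monomial_add hv hv₁ hμ (hdeg i hm) (hdeg j hm')
    have h₂ := extendForms_monomial_add hv hv₁ hμ (hdeg j hm) (hdeg i hm')
    rw [show m + single i 1 + (m' + single j 1) = m + single j 1 + (m' + single i 1) by abel,
      h₂] at h₁
    simp only [wedge, row]
    linear_combination -h₁

theorem eq_zero_of_exchangeOf_eq_zero (hv : v ∈ formSpace n d) (hv₁ : extendForms φ v = 1)
    (hμ : ∀ x ∈ formSpace n d, ∀ y ∈ formSpace n d, extendForms φ x = 0 → extendForms φ y = 0 →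
      extendForms μ (x * y) = 0) (h : exchangeOf φ v μ = 0) : μ = 0 := by
  refine eq_zero_of_extendForms fun p hp => ?_
  rw [LinearMap.apply_eq_sum_coeff]
  refine Finset.sum_eq_zero fun c hc => ?_
  obtain ⟨a, b, ha, hb, rfl⟩ := exists_eq_add_of_degree_eq_add (t := d) (s := d)
    (by rw [degree_of_mem_support hp hc, two_mul])
  rw [extendForms_monomial_add hv hv₁ hμ ha hb, h]
  simp

end Annihilator

theorem vcodim_mul_self_le_rank_exchangeSpace {n k : ℕ} {U : Submodule ℂ (PolyR n)}
    (hU : U ≤ formSpace n (k + 1)) (hbpf : IsBPF n U) (hcodim : vcodim n (k + 1) U = 1) :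
    ∃ f : (Fin n →₀ ℕ) → ℂ, ¬ IsPointEval (k + 1) f ∧
      (vcodim n (2 * (k + 1)) (U * U) : Cardinal) ≤ Module.rank ℂ (exchangeSpace k f) := by
  obtain ⟨φ, hφ₀, hker⟩ := exists_extendForms_eq_zero_iff hU hcodim
  obtain ⟨⟨v, hv⟩, hv₁⟩ := LinearMap.surjective hφ₀ 1
  rw [← extendForms_of_mem φ hv] at hv₁
  refine ⟨_, not_isPointEval_of_isBPF k.succ_ne_zero hU hbpf hφ₀ fun p hp =>
    (hker p (hU hp)).mpr hp, ?_⟩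
  set W := (U * U).comap (formSpace n (2 * (k + 1))).subtype
  have hμ : ∀ μ ∈ W.dualAnnihilator, ∀ x ∈ formSpace n (k + 1), ∀ y ∈ formSpace n (k + 1),
      extendForms φ x = 0 → extendForms φ y = 0 → extendForms μ (x * y) = 0 := by
    intro μ hμ x hx y hy hx₀ hy₀
    have hxy := two_mul (k + 1) ▸ mul_mem_formSpace hx hy
    rw [extendForms_of_mem μ hxy]
    exact (Submodule.mem_dualAnnihilator μ).mp hμ ⟨x * y, hxy⟩
      (Submodule.mul_mem_mul ((hker x hx).mp hx₀) ((hker y hy).mp hy₀))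
  let Ψ := ((exchangeOf φ v).domRestrict W.dualAnnihilator).codRestrict _
    fun μ => exchangeOf_mem_exchangeSpace hv hv₁ (hμ μ μ.2)
  have hinj : Function.Injective Ψ := (injective_iff_map_eq_zero _).mpr fun μ h =>
    Subtype.ext (eq_zero_of_exchangeOf_eq_zero hv hv₁ (hμ μ μ.2) (congrArg Subtype.val h))
  rw [vcodim_eq_finrank_dualAnnihilator (mul_le_formSpace hU), Module.finrank_eq_rank]
  exact LinearMap.rank_le_of_injective Ψ hinj

theorem stmt7_general (n d : ℕ)
    (U : Submodule ℂ (PolyR n)) (hU : U ≤ formSpace n d)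
    (hbpf : IsBPF n U) (hcodim : vcodim n d U = 1) :
    (3 ≤ d → vcodim n (2 * d) (U * U) = 0 ∨ vcodim n (2 * d) (U * U) = 1) ∧
    (d = 2 → vcodim n (2 * d) (U * U) ≤ 2) := by
  refine ⟨fun hd => ?_, fun hd => ?_⟩
  · obtain ⟨k, rfl⟩ : ∃ k, d = k + 3 := ⟨d - 3, by omega⟩
    obtain ⟨f, hf, hle⟩ := vcodim_mul_self_le_rank_exchangeSpace hU hbpf hcodim
    have : vcodim n (2 * (k + 3)) (U * U) ≤ 1 := by
      exact_mod_cast hle.trans (rank_exchangeSpace_le_one hf)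
    omega
  · subst hd
    obtain ⟨f, hf, hle⟩ := vcodim_mul_self_le_rank_exchangeSpace (k := 1) hU hbpf hcodim
    exact_mod_cast hle.trans (rank_exchangeSpace_le_two (k := 0) hf)

theorem stmt7 (n d : ℕ) (hn : 2 ≤ n) (hd : 2 ≤ d)
    (U : Submodule ℂ (PolyR n)) (hU : U ≤ formSpace n d)
    (hbpf : IsBPF n U) (hcodim : vcodim n d U = 1) :
    (3 ≤ d → vcodim n (2 * d) (U * U) = 0 ∨ vcodim n (2 * d) (U * U) = 1) ∧
    (d = 2 → vcodim n (2 * d) (U * U) ≤ 2) :=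
  stmt7_general n d U hU hbpf hcodim
end

section
/- Let U ⊆ A(n)_d be a linear subspace of codimension k, and suppose there exists m with 2 ≤ m ≤ n such that U' := U ∩ A(m)_d has codimension k in A(m)_d. Then codim_{A(n)_{2d}} U² ≤ (n − m)·codim_{A(m)_{2d−1}}(U'·A(m)_{d−1}) + codim_{A(m)_{2d}} (U')². -/
open MvPolynomial Module

/-- The inclusion `A(m) ⊆ A(n)` for `m ≤ n`. -/
noncomputable def embed (m n : ℕ) (h : m ≤ n) : PolyR m →ₐ[ℂ] PolyR n :=
  MvPolynomial.rename (Fin.castLE h)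

/-!
Since `U ∩ A(m)_d = U'` has the same codimension as `U`, we have `A(n)_d = U + A(m)_d`. Choose
complements `T₁` of `U'·A(m)_{d-1}` in `A(m)_{2d-1}` and `T₂` of `U'²` in `A(m)_{2d}`; the bound
follows from `A(n)_{2d} = U² + T₂ + ∑_{i ≥ m} xᵢ T₁`.

This is checked on monomials, by induction on their degree in the new variables `xᵢ`, `i ≥ m`.
A monomial of degree `≥ 2` in them factors as `a b` with `a, b` of degree `d`, each containing a
new variable. Writing `a = u₁ + w₁`, `b = u₂ + w₂` with `uᵢ ∈ U`, `wᵢ ∈ A(m)_d`,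
`a b = u₁ u₂ + a w₂ + b w₁ - w₁ w₂`, and the cross terms have smaller degree in the new variables.
Monomials of degree `≤ 1` in them lie in `A(m)_{2d} = U'² + T₂` or in `xᵢ A(m)_{2d-1}`, and
`xᵢ U' A(m)_{d-1} ⊆ U' A(n)_d = U' (U + A(m)_d) ⊆ U² + A(m)_{2d}`.
-/

namespace Submodule

variable {K V : Type*} [DivisionRing K] [AddCommGroup V] [Module K V]

theorem exists_sup_eq_finrank_eq_sub {P Q : Submodule K V} [FiniteDimensional K Q] (hPQ : P ≤ Q) :
    ∃ T ≤ Q, P ⊔ T = Q ∧ finrank K T = finrank K Q - finrank K P := by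
  obtain ⟨T, hT⟩ := (P.comap Q.subtype).exists_isCompl
  have hP : (P.comap Q.subtype).map Q.subtype = P := by
    rw [map_comap_subtype, inf_eq_right.mpr hPQ]
  refine ⟨T.map Q.subtype, map_subtype_le _ _, ?_, ?_⟩
  · rw [← hP, ← map_sup, hT.codisjoint.eq_top, map_top, range_subtype]
  · have := finrank_add_eq_of_isCompl hT
    rw [← finrank_map_subtype_eq, hP] at this
    rw [finrank_map_subtype_eq]
    omega

theorem sup_eq_of_finrank_add_le {U W Q : Submodule K V} [FiniteDimensional K Q] (hU : U ≤ Q)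
    (hW : W ≤ Q) (h : finrank K Q + finrank K ↥(U ⊓ W) ≤ finrank K U + finrank K W) :
    U ⊔ W = Q := by
  have : FiniteDimensional K U := finiteDimensional_of_le hU
  have : FiniteDimensional K W := finiteDimensional_of_le hW
  refine eq_of_le_of_finrank_le (sup_le hU hW) ?_
  have := finrank_sup_add_finrank_inf_eq U W
  omega

theorem finrank_sub_finrank_le_of_le_sup {P Q R : Submodule K V} [FiniteDimensional K Q]
    [FiniteDimensional K R] (hPQ : P ≤ Q) (hQ : Q ≤ P ⊔ R) :
    finrank K Q - finrank K P ≤ finrank K R := by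
  have : FiniteDimensional K P := finiteDimensional_of_le hPQ
  have := finrank_mono hQ
  have := finrank_add_le_finrank_add_finrank P R
  omega

end Submodule

instance (n d : ℕ) : FiniteDimensional ℂ (formSpace n d) :=
  Module.Finite.iff_fg.mpr (homogeneousSubmodule_fg _ _ d)

theorem formSpace_mul_le {n a b c : ℕ} (h : a + b = c) {P Q : Submodule ℂ (PolyR n)}
    (hP : P ≤ formSpace n a) (hQ : Q ≤ formSpace n b) : P * Q ≤ formSpace n c :=
  h ▸ (mul_le_mul' hP hQ).trans (homogeneousSubmodule_mul a b)

theorem formSpace_le_of_monomial_mem {n d : ℕ} {B : Submodule ℂ (PolyR n)}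
    (h : ∀ s : Fin n →₀ ℕ, s.degree = d → monomial s 1 ∈ B) : formSpace n d ≤ B := by
  intro p hp
  rw [p.as_sum]
  refine B.sum_mem fun s hs => ?_
  rw [← mul_one (coeff s p), ← smul_eq_mul, ← smul_monomial]
  refine B.smul_mem _ (h s ?_)
  rw [Finsupp.degree_eq_weight_one]
  exact hp (mem_support_iff.mp hs)

section embed

variable {m n : ℕ} (hmn : m ≤ n)

theorem embed_monomial (s : Fin m →₀ ℕ) (c : ℂ) :
    embed m n hmn (monomial s c) = monomial (s.mapDomain (Fin.castLE hmn)) c :=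
  rename_monomial _ _ _

theorem map_embed_formSpace_le (d : ℕ) :
    (formSpace m d).map (embed m n hmn).toLinearMap ≤ formSpace n d := by
  rintro _ ⟨p, hp, rfl⟩
  exact hp.rename_isHomogeneous

theorem finrank_map_embed (W : Submodule ℂ (PolyR m)) :
    finrank ℂ (W.map (embed m n hmn).toLinearMap) = finrank ℂ W :=
  (W.equivMapOfInjective _ (rename_injective _ (Fin.castLE_injective hmn))).finrank_eq.symm

theorem sup_map_embed_formSpace_eq {d : ℕ} {U : Submodule ℂ (PolyR n)}
    (hU : U ≤ formSpace n d) {U' : Submodule ℂ (PolyR m)}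
    (hU' : U' = U.comap (embed m n hmn).toLinearMap ⊓ formSpace m d)
    (hcodim : vcodim n d U = vcodim m d U') :
    U ⊔ (formSpace m d).map (embed m n hmn).toLinearMap = formSpace n d := by
  have hinf : U ⊓ (formSpace m d).map (embed m n hmn).toLinearMap =
      U'.map (embed m n hmn).toLinearMap := by
    rw [inf_comm, Submodule.map_inf_eq_map_inf_comap, hU', inf_comm]
  refine Submodule.sup_eq_of_finrank_add_le hU (map_embed_formSpace_le hmn d) ?_
  have h1 := Submodule.finrank_mono hU
  have h2 : finrank ℂ U' ≤ finrank ℂ (formSpace m d) := Submodule.finrank_mono (hU' ▸ inf_le_right)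
  rw [hinf, finrank_map_embed, finrank_map_embed]
  unfold vcodim at hcodim
  omega

end embed

theorem Finsupp.exists_single_one_add_eq {α : Type*} {s : α →₀ ℕ} {i : α} (hi : s i ≠ 0) :
    ∃ ν, Finsupp.single i 1 + ν = s :=
  ⟨_, add_tsub_cancel_of_le (Finsupp.single_le_iff.mpr (Nat.one_le_iff_ne_zero.mpr hi))⟩

theorem Finsupp.exists_add_eq_of_degree_eq_add {α : Type*} (a : ℕ) :
    ∀ {b : ℕ} {s : α →₀ ℕ}, s.degree = a + b →
      ∃ s₁ s₂ : α →₀ ℕ, s₁ + s₂ = s ∧ s₁.degree = a ∧ s₂.degree = b := by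
  induction a with
  | zero => exact fun {b s} h => ⟨0, s, zero_add s, map_zero _, by simpa using h⟩
  | succ a ih =>
    intro b s h
    obtain ⟨i, hi⟩ : ∃ i, s i ≠ 0 := by
      by_contra! h0
      simp [Finsupp.ext (g := 0) h0] at h
      omega
    obtain ⟨ν, rfl⟩ := Finsupp.exists_single_one_add_eq hi
    obtain ⟨s₁, s₂, rfl, h₁, h₂⟩ := ih (b := b) (s := ν) (by simp at h; omega)
    exact ⟨Finsupp.single i 1 + s₁, s₂, add_assoc _ _ _, by simp [h₁]; omega, h₂⟩

noncomputable def extraDegree (m : ℕ) {n : ℕ} : (Fin n →₀ ℕ) →+ ℕ :=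
  Finsupp.weight fun i : Fin n => if m ≤ (i : ℕ) then 1 else 0

section extraDegree

variable {m n : ℕ}

theorem extraDegree_eq_zero_iff {s : Fin n →₀ ℕ} :
    extraDegree m s = 0 ↔ ∀ i : Fin n, m ≤ (i : ℕ) → s i = 0 := by
  simp [extraDegree, Finsupp.weight_eq_sum, Finset.sum_eq_zero_iff]

theorem extraDegree_single_one {i : Fin n} (hi : m ≤ (i : ℕ)) :
    extraDegree m (Finsupp.single i 1) = 1 := by
  simp [extraDegree, Finsupp.weight_single, hi]

theorem extraDegree_mapDomain_castLE (hmn : m ≤ n) (t : Fin m →₀ ℕ) :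
    extraDegree m (t.mapDomain (Fin.castLE hmn)) = 0 := by
  refine extraDegree_eq_zero_iff.mpr fun i hi => Finsupp.notMem_support_iff.mp fun hs => ?_
  obtain ⟨j, -, rfl⟩ := Finset.mem_image.mp (Finsupp.mapDomain_support hs)
  simp only [Fin.val_castLE] at hi
  exact absurd j.isLt (by omega)

theorem exists_mapDomain_castLE_eq (hmn : m ≤ n) {s : Fin n →₀ ℕ} (hs : extraDegree m s = 0) :
    ∃ t : Fin m →₀ ℕ, t.mapDomain (Fin.castLE hmn) = s := by
  have hsupp : ↑s.support ⊆ Set.range (Fin.castLE hmn) := fun i hi => by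
    have : ¬ m ≤ (i : ℕ) := fun h =>
      Finsupp.mem_support_iff.mp hi (extraDegree_eq_zero_iff.mp hs i h)
    exact ⟨⟨i, by omega⟩, rfl⟩
  exact ⟨_, Finsupp.mapDomain_comapDomain _ (Fin.castLE_injective hmn) s hsupp⟩

theorem exists_single_add_eq {s : Fin n →₀ ℕ} (hs : extraDegree m s ≠ 0) :
    ∃ i : Fin n, m ≤ (i : ℕ) ∧ ∃ ν, Finsupp.single i 1 + ν = s := by
  obtain ⟨i, hi, hsi⟩ : ∃ i : Fin n, m ≤ (i : ℕ) ∧ s i ≠ 0 := by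
    simpa using mt extraDegree_eq_zero_iff.mpr hs
  exact ⟨i, hi, Finsupp.exists_single_one_add_eq hsi⟩

theorem exists_add_eq_of_two_le_extraDegree {d : ℕ} {s : Fin n →₀ ℕ} (hs : s.degree = 2 * d)
    (he : 2 ≤ extraDegree m s) :
    ∃ s₁ s₂ : Fin n →₀ ℕ, s₁ + s₂ = s ∧ s₁.degree = d ∧ s₂.degree = d ∧
      extraDegree m s₁ ≠ 0 ∧ extraDegree m s₂ ≠ 0 := by
  obtain ⟨i, hi, s', rfl⟩ := exists_single_add_eq (m := m) (s := s) (by omega)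
  obtain ⟨j, hj, ν, rfl⟩ := exists_single_add_eq (m := m) (s := s')
    (by simp [extraDegree_single_one hi] at he; omega)
  obtain ⟨σ₁, σ₂, rfl, h₁, h₂⟩ :=
    Finsupp.exists_add_eq_of_degree_eq_add (d - 1) (b := d - 1) (s := ν) (by simp at hs; omega)
  refine ⟨Finsupp.single i 1 + σ₁, Finsupp.single j 1 + σ₂, by abel, ?_, ?_, ?_, ?_⟩
  all_goals simp [extraDegree_single_one, hi, hj, h₁, h₂] at hs ⊢; try omega

end extraDegree

section spanning

variable {m n d : ℕ} (hmn : m ≤ n) {B : Submodule ℂ (PolyR n)}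

theorem monomial_mem_of_extraDegree_le_one
    (hbase : (formSpace m (2 * d)).map (embed m n hmn).toLinearMap ≤ B)
    (hlin : ∀ i : Fin n, m ≤ (i : ℕ) → ∀ p ∈ formSpace m (2 * d - 1), X i * embed m n hmn p ∈ B)
    {s : Fin n →₀ ℕ} (hs : s.degree = 2 * d) (he : extraDegree m s ≤ 1) : monomial s 1 ∈ B := by
  rcases Nat.le_one_iff_eq_zero_or_eq_one.mp he with he | he
  · obtain ⟨t, rfl⟩ := exists_mapDomain_castLE_eq hmn he
    rw [← embed_monomial]
    exact hbase ⟨_, isHomogeneous_monomial 1 (by simpa using hs), rfl⟩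
  · obtain ⟨i, hi, ν, rfl⟩ := exists_single_add_eq (m := m) (s := s) (by omega)
    obtain ⟨t, rfl⟩ := exists_mapDomain_castLE_eq hmn (m := m) (s := ν)
      (by simpa [extraDegree_single_one hi] using he)
    rw [← one_mul (1 : ℂ), ← monomial_mul, ← X, ← embed_monomial]
    exact hlin i hi _ (isHomogeneous_monomial 1 (by simp at hs ⊢; omega))

theorem monomial_mul_embed_mem {e : ℕ}
    (hB : ∀ s : Fin n →₀ ℕ, s.degree = 2 * d → extraDegree m s < e → monomial s 1 ∈ B)
    {s : Fin n →₀ ℕ} (hs : s.degree = d) (he : extraDegree m s < e) {p : PolyR m}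
    (hp : p ∈ formSpace m d) : monomial s 1 * embed m n hmn p ∈ B := by
  suffices formSpace m d ≤
      B.comap (LinearMap.mulLeft ℂ (monomial s 1) ∘ₗ (embed m n hmn).toLinearMap) from this hp
  refine formSpace_le_of_monomial_mem fun t ht => ?_
  simp only [Submodule.mem_comap, LinearMap.comp_apply, AlgHom.toLinearMap_apply,
    LinearMap.mulLeft_apply, embed_monomial, monomial_mul, one_mul]
  exact hB _ (by simp [hs, ht]; omega) (by simpa [extraDegree_mapDomain_castLE] using he)

theorem monomial_mem_of_sup_eq {U : Submodule ℂ (PolyR n)}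
    (hsup : U ⊔ (formSpace m d).map (embed m n hmn).toLinearMap = formSpace n d)
    (hUU : U * U ≤ B) (hbase : (formSpace m (2 * d)).map (embed m n hmn).toLinearMap ≤ B)
    (hlin : ∀ i : Fin n, m ≤ (i : ℕ) → ∀ p ∈ formSpace m (2 * d - 1), X i * embed m n hmn p ∈ B)
    (s : Fin n →₀ ℕ) (hs : s.degree = 2 * d) : monomial s 1 ∈ B := by
  induction h : extraDegree m s using Nat.strong_induction_on generalizing s with
  | _ e ih =>
  subst h
  rcases le_or_gt (extraDegree m s) 1 with he | he
  · exact monomial_mem_of_extraDegree_le_one hmn hbase hlin hs he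
  obtain ⟨s₁, s₂, rfl, h₁, h₂, he₁, he₂⟩ := exists_add_eq_of_two_le_extraDegree hs he
  have hB t (ht : t.degree = 2 * d) (hlt : extraDegree m t < extraDegree m (s₁ + s₂)) :
      monomial t (1 : ℂ) ∈ B := ih _ hlt t ht rfl
  obtain ⟨u₁, hu₁, _, ⟨p₁, hp₁, rfl⟩, hsum₁⟩ :=
    Submodule.mem_sup.mp (hsup.ge (isHomogeneous_monomial _ h₁ : monomial s₁ (1 : ℂ) ∈ _))
  obtain ⟨u₂, hu₂, _, ⟨p₂, hp₂, rfl⟩, hsum₂⟩ :=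
    Submodule.mem_sup.mp (hsup.ge (isHomogeneous_monomial _ h₂ : monomial s₂ (1 : ℂ) ∈ _))
  simp only [AlgHom.toLinearMap_apply] at hsum₁ hsum₂
  have hsplit {a b u₁ u₂ w₁ w₂ : PolyR n} (ha : u₁ + w₁ = a) (hb : u₂ + w₂ = b) :
      a * b = u₁ * u₂ + a * w₂ + b * w₁ - w₁ * w₂ := by
    subst ha hb; ring
  rw [← one_mul (1 : ℂ), ← monomial_mul, hsplit hsum₁ hsum₂, ← map_mul]
  refine sub_mem (add_mem (add_mem (hUU (Submodule.mul_mem_mul hu₁ hu₂)) ?_) ?_)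
    (hbase ⟨_, formSpace_mul_le (two_mul d).symm le_rfl le_rfl
      (Submodule.mul_mem_mul hp₁ hp₂), rfl⟩)
  · exact monomial_mul_embed_mem hmn hB h₁ (by rw [map_add]; omega) hp₂
  · exact monomial_mul_embed_mem hmn hB h₂ (by rw [map_add]; omega) hp₁

end spanning

section extension

variable {m n : ℕ} (hmn : m ≤ n)

/-- `(t, f) ↦ t + ∑ⱼ x_{m+j} f j`, with `t` and the `f j` read in `A(n)`. -/
noncomputable def extensionMap (T₁ T₂ : Submodule ℂ (PolyR m)) :
    T₂ × (Fin (n - m) → T₁) →ₗ[ℂ] PolyR n :=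
  ((embed m n hmn).toLinearMap ∘ₗ T₂.subtype).coprod <| ∑ j : Fin (n - m),
    LinearMap.mulLeft ℂ (X ⟨m + j, by omega⟩) ∘ₗ (embed m n hmn).toLinearMap ∘ₗ T₁.subtype ∘ₗ
      LinearMap.proj j

theorem finrank_range_extensionMap_le (T₁ T₂ : Submodule ℂ (PolyR m)) [FiniteDimensional ℂ T₁]
    [FiniteDimensional ℂ T₂] :
    finrank ℂ (LinearMap.range (extensionMap hmn T₁ T₂)) ≤
      finrank ℂ T₂ + (n - m) * finrank ℂ T₁ := by
  refine (LinearMap.finrank_range_le _).trans_eq ?_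
  simp [Module.finrank_prod, Module.finrank_pi_fintype]

theorem embed_mem_range_extensionMap {T₁ T₂ : Submodule ℂ (PolyR m)} {t : PolyR m} (ht : t ∈ T₂) :
    embed m n hmn t ∈ LinearMap.range (extensionMap hmn T₁ T₂) :=
  ⟨(⟨t, ht⟩, 0), by simp [extensionMap]⟩

theorem X_mul_embed_mem_range_extensionMap {T₁ T₂ : Submodule ℂ (PolyR m)} {i : Fin n}
    (hi : m ≤ (i : ℕ)) {t : PolyR m} (ht : t ∈ T₁) :
    X i * embed m n hmn t ∈ LinearMap.range (extensionMap hmn T₁ T₂) := by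
  set j : Fin (n - m) := ⟨i - m, by omega⟩
  have hij : (⟨m + j, by omega⟩ : Fin n) = i := Fin.ext (by simp only [j]; omega)
  refine ⟨(0, Pi.single j ⟨t, ht⟩), ?_⟩
  rw [extensionMap, LinearMap.coprod_apply, map_zero, zero_add, LinearMap.sum_apply,
    Finset.sum_eq_single_of_mem j (Finset.mem_univ _)
      fun j' _ hj' => by simp [Pi.single_eq_of_ne hj']]
  simp [hij]

end extension

theorem span_X_mul_map_embed_le {m n d : ℕ} (hmn : m ≤ n) (hd : 1 ≤ d)
    {U : Submodule ℂ (PolyR n)} {U' : Submodule ℂ (PolyR m)}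
    (hsup : U ⊔ (formSpace m d).map (embed m n hmn).toLinearMap = formSpace n d)
    (hU'U : U'.map (embed m n hmn).toLinearMap ≤ U) (hU'd : U' ≤ formSpace m d) (i : Fin n) :
    Submodule.span ℂ {X i} * (U' * formSpace m (d - 1)).map (embed m n hmn).toLinearMap ≤
      U * U ⊔ (formSpace m (2 * d)).map (embed m n hmn).toLinearMap := by
  set ι := (embed m n hmn).toLinearMap
  have hXd : Submodule.span ℂ {X i} * (formSpace m (d - 1)).map ι ≤ formSpace n d :=
    formSpace_mul_le (by omega : 1 + (d - 1) = d)
      (Submodule.span_le.mpr (Set.singleton_subset_iff.mpr (isHomogeneous_X ℂ i)))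
      (map_embed_formSpace_le hmn _)
  calc Submodule.span ℂ {X i} * (U' * formSpace m (d - 1)).map ι
      = U'.map ι * (Submodule.span ℂ {X i} * (formSpace m (d - 1)).map ι) := by
        rw [Submodule.map_mul]; ring
    _ ≤ U'.map ι * (U ⊔ (formSpace m d).map ι) := mul_le_mul' le_rfl (hsup ▸ hXd)
    _ = U'.map ι * U ⊔ (U' * formSpace m d).map ι := by rw [Submodule.mul_sup, Submodule.map_mul]
    _ ≤ U * U ⊔ (formSpace m (2 * d)).map ι :=
        sup_le_sup (mul_le_mul' hU'U le_rfl)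
          (Submodule.map_mono (formSpace_mul_le (two_mul d).symm hU'd le_rfl))

theorem formSpace_two_mul_le_sup_range_extensionMap {m n d : ℕ} (hmn : m ≤ n) (hd : 1 ≤ d)
    {U : Submodule ℂ (PolyR n)} {U' T₁ T₂ : Submodule ℂ (PolyR m)}
    (hsup : U ⊔ (formSpace m d).map (embed m n hmn).toLinearMap = formSpace n d)
    (hU'U : U'.map (embed m n hmn).toLinearMap ≤ U) (hU'd : U' ≤ formSpace m d)
    (hT₁ : U' * formSpace m (d - 1) ⊔ T₁ = formSpace m (2 * d - 1))
    (hT₂ : U' * U' ⊔ T₂ = formSpace m (2 * d)) :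
    formSpace n (2 * d) ≤ U * U ⊔ LinearMap.range (extensionMap hmn T₁ T₂) := by
  have hbase : (formSpace m (2 * d)).map (embed m n hmn).toLinearMap ≤
      U * U ⊔ LinearMap.range (extensionMap hmn T₁ T₂) := by
    rw [← hT₂, Submodule.map_sup, Submodule.map_mul]
    exact sup_le_sup (mul_le_mul' hU'U hU'U) (Submodule.map_le_iff_le_comap.mpr
      fun t ht => embed_mem_range_extensionMap hmn ht)
  refine formSpace_le_of_monomial_mem (monomial_mem_of_sup_eq hmn hsup le_sup_left hbase ?_)
  intro i hi p hp
  obtain ⟨a, ha, t, ht, rfl⟩ := Submodule.mem_sup.mp (hT₁ ▸ hp)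
  rw [map_add, mul_add]
  refine add_mem ?_ (Submodule.mem_sup_right (X_mul_embed_mem_range_extensionMap hmn hi ht))
  exact sup_le le_sup_left hbase (span_X_mul_map_embed_le hmn hd hsup hU'U hU'd i
    (Submodule.mul_mem_mul (Submodule.mem_span_singleton_self _) ⟨a, ha, rfl⟩))

theorem stmt8_general (n m d k : ℕ) (hd : 2 ≤ d) (hmn : m ≤ n)
    (U : Submodule ℂ (PolyR n)) (hU : U ≤ formSpace n d)
    (hcodim : vcodim n d U = k)
    (U' : Submodule ℂ (PolyR m))
    (hU' : U' = Submodule.comap (embed m n hmn).toLinearMap U ⊓ formSpace m d)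
    (hcodim' : vcodim m d U' = k) :
    vcodim n (2 * d) (U * U) ≤
      (n - m) * vcodim m (2 * d - 1) (U' * formSpace m (d - 1)) +
        vcodim m (2 * d) (U' * U') := by
  have hU'd : U' ≤ formSpace m d := hU' ▸ inf_le_right
  have hU'U : U'.map (embed m n hmn).toLinearMap ≤ U :=
    Submodule.map_le_iff_le_comap.mpr (hU' ▸ inf_le_left)
  obtain ⟨T₁, hT₁, hT₁sup, hT₁rank⟩ := Submodule.exists_sup_eq_finrank_eq_sub
    (formSpace_mul_le (by omega : d + (d - 1) = 2 * d - 1) hU'd le_rfl)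
  obtain ⟨T₂, hT₂, hT₂sup, hT₂rank⟩ := Submodule.exists_sup_eq_finrank_eq_sub
    (formSpace_mul_le (two_mul d).symm hU'd hU'd)
  have : FiniteDimensional ℂ T₁ := Submodule.finiteDimensional_of_le hT₁
  have : FiniteDimensional ℂ T₂ := Submodule.finiteDimensional_of_le hT₂
  have hspan := formSpace_two_mul_le_sup_range_extensionMap hmn (by omega)
    (sup_map_embed_formSpace_eq hmn hU hU' (hcodim.trans hcodim'.symm)) hU'U hU'd hT₁sup hT₂sup
  calc vcodim n (2 * d) (U * U)
      ≤ finrank ℂ (LinearMap.range (extensionMap hmn T₁ T₂)) :=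
        Submodule.finrank_sub_finrank_le_of_le_sup (formSpace_mul_le (two_mul d).symm hU hU) hspan
    _ ≤ finrank ℂ T₂ + (n - m) * finrank ℂ T₁ := finrank_range_extensionMap_le hmn T₁ T₂
    _ = _ := by rw [hT₁rank, hT₂rank, add_comm]; rfl

theorem stmt8 (n m d k : ℕ) (hd : 2 ≤ d) (hm : 2 ≤ m) (hmn : m ≤ n)
    (U : Submodule ℂ (PolyR n)) (hU : U ≤ formSpace n d)
    (hcodim : vcodim n d U = k)
    (U' : Submodule ℂ (PolyR m))
    (hU' : U' = Submodule.comap (embed m n hmn).toLinearMap U ⊓ formSpace m d)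
    (hcodim' : vcodim m d U' = k) :
    vcodim n (2 * d) (U * U) ≤
      (n - m) * vcodim m (2 * d - 1) (U' * formSpace m (d - 1)) +
        vcodim m (2 * d) (U' * U') :=
  stmt8_general n m d k hd hmn U hU hcodim U' hU' hcodim'
end

section
/- Let U ⊆ A_d be a linear subspace of codimension k with k ≤ d. Then for a generic linear form l ∈ A₁ one has U + l·A_{d−1} = A_d, and consequently the subspace (U:l) = {q ∈ A_{d−1} : l·q ∈ U} has codimension k in A_{d−1}. -/
open MvPolynomial Module

/-! Choose `Φ : A → ℂᵏ` with `ker Φ ∩ A_d = U` and `Φ (A_d) = ℂᵏ`. Both claims hold for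
`l = Σ cᵢ xᵢ` as soon as `q ↦ Φ (l q)` maps `A_{d-1}` onto `ℂᵏ`, i.e. as soon as the matrix
`M(c)` of this map has independent rows. Its entries are linear in `c`, so if the rows of `M` are
independent over `ℂ[c]`, a nonzero minor of `M` (found over the fraction field) is the
polynomial `P`.

A relation `w(c) · M(c) = 0` over `ℂ[c]` gives functionals `ψ_c = w(c) · Φ` killing
`l_c A_{d-1}`, hence `ψ_c (l_{s c + μ v}^d) = μ^d ψ_c (l_v^d)`. Take `c_a = u + a v` and
`y_b = b u + v` for `0 ≤ a, b ≤ d`: since `y_b = b c_a + (1 - a b) v`, the matrix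
`ψ_{c_a} (l_{y_b}^d)` equals `(1 - a b)^d ψ_{c_a} (l_v^d)`, which is nonsingular by Vandermonde
for suitable `u, v` (the `d`-th powers of linear forms span `A_d` in characteristic zero).
But it factors through `ℂᵏ`, and `k ≤ d`. -/

theorem Submodule.exists_ker_inf_eq_map_eq_top {K V : Type*} [Field K] [AddCommGroup V]
    [Module K V] {U D : Submodule K V} [FiniteDimensional K D] (hUD : U ≤ D) {k : ℕ}
    (hk : finrank K D - finrank K U = k) :
    ∃ Φ : V →ₗ[K] (Fin k → K), LinearMap.ker Φ ⊓ D = U ∧ D.map Φ = ⊤ := by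
  set U' := U.comap D.subtype
  have hQ : finrank K (D ⧸ U') = finrank K (Fin k → K) := by
    have := U'.finrank_quotient_add_finrank
    rw [(Submodule.comapSubtypeEquivOfLe hUD).finrank_eq] at this
    simp only [finrank_fin_fun]
    omega
  set π := (LinearEquiv.ofFinrankEq _ _ hQ).toLinearMap ∘ₗ U'.mkQ
  obtain ⟨Φ, hΦ⟩ := LinearMap.exists_extend π
  have hΦD (p : D) : Φ p = π p := LinearMap.congr_fun hΦ p
  have hker (p : D) : Φ p = 0 ↔ (p : V) ∈ U := by
    simp [hΦD, π, U']
  refine ⟨Φ, le_antisymm ?_ ?_, ?_⟩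
  · rintro p ⟨hp0, hpD⟩
    exact (hker ⟨p, hpD⟩).mp hp0
  · intro p hp
    exact ⟨(hker ⟨p, hUD hp⟩).mpr hp, hUD hp⟩
  · rw [eq_top_iff]
    rintro x -
    obtain ⟨q, hq⟩ := (LinearEquiv.ofFinrankEq _ _ hQ).surjective x
    obtain ⟨p, rfl⟩ := U'.mkQ_surjective q
    exact ⟨p, p.2, (hΦD p).trans hq⟩

section Colon

variable {K A : Type*} [Field K] [CommRing A] [Algebra K A] {k : ℕ} {U D E : Submodule K A}
  {l : A} {Φ : A →ₗ[K] (Fin k → K)}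

theorem sup_span_singleton_mul_eq (hΦ : LinearMap.ker Φ ⊓ D = U)
    (hlE : Submodule.span K {l} * E ≤ D)
    (hT : Function.Surjective (Φ ∘ₗ LinearMap.mulLeft K l ∘ₗ E.subtype)) :
    U ⊔ Submodule.span K {l} * E = D := by
  refine le_antisymm (sup_le (hΦ ▸ inf_le_right) hlE) fun p hp => ?_
  obtain ⟨q, hq⟩ := hT (Φ p)
  have hlq : l * q ∈ Submodule.span K {l} * E :=
    Submodule.mul_mem_mul (Submodule.mem_span_singleton_self l) q.2
  have hdiff : p - l * q ∈ U := by
    rw [← hΦ]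
    refine ⟨?_, D.sub_mem hp (hlE hlq)⟩
    simp_all [LinearMap.mem_ker]
  simpa using Submodule.add_mem_sup hdiff hlq

theorem finrank_sub_finrank_comap_mulLeft_inf [FiniteDimensional K E]
    (hΦ : LinearMap.ker Φ ⊓ D = U) (hlE : Submodule.span K {l} * E ≤ D)
    (hT : Function.Surjective (Φ ∘ₗ LinearMap.mulLeft K l ∘ₗ E.subtype)) :
    finrank K E - finrank K ↥((U.comap (LinearMap.mulLeft K l)) ⊓ E) = k := by
  set T := Φ ∘ₗ LinearMap.mulLeft K l ∘ₗ E.subtype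
  have hker : LinearMap.ker T = ((U.comap (LinearMap.mulLeft K l)) ⊓ E).comap E.subtype := by
    ext q
    have hlq : l * q ∈ D :=
      hlE (Submodule.mul_mem_mul (Submodule.mem_span_singleton_self l) q.2)
    simp [T, ← hΦ, hlq]
  have := T.finrank_range_add_finrank_ker
  rw [LinearMap.range_eq_top.mpr hT, finrank_top, finrank_fin_fun, hker,
    (Submodule.comapSubtypeEquivOfLe inf_le_right).finrank_eq] at this
  omega

end Colon

namespace Matrix

variable {m n : Type*} [Fintype m] [DecidableEq m] [Fintype n]

theorem exists_det_mul_ne_zero_of_linearIndependent {R : Type*} [CommRing R] [IsDomain R]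
    {M : Matrix m n R} (hM : LinearIndependent R M.row) : ∃ C : Matrix n m R, (M * C).det ≠ 0 := by
  set K := FractionRing R
  set ι := algebraMap R K
  have hι : Function.Injective ι := IsFractionRing.injective R K
  have hMK : LinearIndependent K (M.map ι).row := by
    rw [← LinearIndependent.iff_fractionRing R K]
    exact hM.map' ((Algebra.linearMap R K).compLeft n)
      (LinearMap.ker_eq_bot.mpr (hι.comp_left))
  have hsurj : Function.Surjective (M.map ι).mulVec := by
    have hrange : LinearMap.range (M.map ι).mulVecLin = ⊤ := by
      apply Submodule.eq_top_of_finrank_eq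
      rw [← rank, hMK.rank_matrix, finrank_fintype_fun_eq_card]
    exact LinearMap.range_eq_top.mp hrange
  obtain ⟨CK, hCK⟩ := mulVec_surjective_iff_exists_right_inverse.mp hsurj
  obtain ⟨b, hb⟩ := IsLocalization.exist_integer_multiples_of_finite (nonZeroDivisors R)
    (fun p : n × m => CK p.1 p.2)
  choose C hC using hb
  refine ⟨of fun j i => C (j, i), fun h0 => ?_⟩
  have hmap : (M * of fun j i => C (j, i)).map ι = ι b • (M.map ι * CK) := by
    ext i i'
    simp only [map_apply, mul_apply, of_apply, map_sum, map_mul, smul_apply, Finset.smul_sum]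
    refine Finset.sum_congr rfl fun j _ => ?_
    rw [hC (j, i'), Algebra.smul_def, smul_eq_mul]
    ring
  have := congrArg ι h0
  rw [RingHom.map_det, RingHom.mapMatrix_apply, hmap, hCK, map_zero, det_smul, det_one,
    mul_one] at this
  exact nonZeroDivisors.ne_zero b.2 (hι ((pow_eq_zero_iff'.mp this).1.trans (map_zero ι).symm))

theorem card_le_of_det_mul_ne_zero {K : Type*} [Field K] {A : Matrix m n K} {B : Matrix n m K}
    (h : (A * B).det ≠ 0) : Fintype.card m ≤ Fintype.card n :=
  calc Fintype.card m = (A * B).rank :=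
        (rank_of_isUnit _ ((isUnit_iff_isUnit_det _).mpr h.isUnit)).symm
    _ ≤ A.rank := rank_mul_le_left A B
    _ ≤ Fintype.card n := rank_le_card_width A

theorem exists_ne_zero_forall_eval_ne_zero_surjective_mulVec {σ K : Type*} [Field K]
    {M : Matrix m n (MvPolynomial σ K)} (hM : LinearIndependent (MvPolynomial σ K) M.row) :
    ∃ P : MvPolynomial σ K, P ≠ 0 ∧
      ∀ c, eval c P ≠ 0 → Function.Surjective (M.map (eval c)).mulVec := by
  obtain ⟨C, hC⟩ := exists_det_mul_ne_zero_of_linearIndependent hM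
  refine ⟨_, hC, fun c hc x => ?_⟩
  have hunit : IsUnit (M.map (eval c) * C.map (eval c)) := by
    rw [isUnit_iff_isUnit_det, ← Matrix.map_mul, ← RingHom.mapMatrix_apply, ← RingHom.map_det]
    exact hc.isUnit
  obtain ⟨y, hy⟩ := mulVec_surjective_iff_isUnit.mpr hunit x
  exact ⟨_, (mulVec_mulVec _ _ _).trans hy⟩

theorem det_one_sub_mul_pow_ne_zero {K : Type*} [Field K] [CharZero K] {D : ℕ}
    {s t : Fin (D + 1) → K} (hs : Function.Injective s) (ht : Function.Injective t) :
    (of fun a b => (1 - s a * t b) ^ D).det ≠ 0 := by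
  have hfactor : (of fun a b => (1 - s a * t b) ^ D) = vandermonde s *
      (diagonal (fun r : Fin (D + 1) => (-1) ^ (r : ℕ) * (D.choose r : K)) * (vandermonde t)ᵀ) := by
    ext a b
    rw [of_apply, sub_eq_neg_add, add_pow, ← Fin.sum_univ_eq_sum_range, mul_apply]
    refine Finset.sum_congr rfl fun r _ => ?_
    simp only [diagonal_mul, transpose_apply, vandermonde_apply, one_pow, mul_one]
    ring
  rw [hfactor, det_mul, det_mul, det_transpose, det_diagonal]
  refine mul_ne_zero (det_vandermonde_ne_zero_iff.mpr hs)
    (mul_ne_zero ?_ (det_vandermonde_ne_zero_iff.mpr ht))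
  exact Finset.prod_ne_zero_iff.mpr fun r _ =>
    mul_ne_zero (pow_ne_zero _ (neg_ne_zero.mpr one_ne_zero))
      (Nat.cast_ne_zero.mpr (Nat.choose_pos (Nat.lt_succ_iff.mp r.2)).ne')

end Matrix

namespace MvPolynomial

variable {σ K : Type*} [Field K]

theorem exists_eval_ne_zero [Infinite K] {p : MvPolynomial σ K} (hp : p ≠ 0) :
    ∃ x, eval x p ≠ 0 := by
  by_contra! h
  exact hp (funext fun x => by simpa using h x)

theorem exists_forall_eval_add_smul_ne_zero [Infinite K] {H : MvPolynomial σ K} (hH : H ≠ 0)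
    (v : σ → K) {ι : Type*} [Fintype ι] (s : ι → K) : ∃ u, ∀ a, eval (u + s a • v) H ≠ 0 := by
  set shift : ι → MvPolynomial σ K := fun a => bind₁ (fun t => X t + C (s a * v t)) H
  have heval (a : ι) (u : σ → K) : eval u (shift a) = eval (u + s a • v) H := by
    refine (eval₂Hom_bind₁ _ _ _ _).trans ?_
    congr 2
    funext t
    simp
  obtain ⟨x, hx⟩ := exists_eval_ne_zero hH
  have hprod : ∏ a, shift a ≠ 0 := Finset.prod_ne_zero_iff.mpr fun a _ h0 => hx <| by
    have := heval a (x - s a • v)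
    rwa [h0, map_zero, sub_add_cancel, eq_comm] at this
  obtain ⟨u, hu⟩ := exists_eval_ne_zero hprod
  refine ⟨u, fun a h0 => hu ?_⟩
  rw [map_prod]
  exact Finset.prod_eq_zero (Finset.mem_univ a) ((heval a u).trans h0)

theorem apply_add_pow_succ_eq {R M : Type*} [CommRing R] [AddCommGroup M]
    [Module R M] {e : ℕ} (Ψ : MvPolynomial σ R →ₗ[R] M) {l l' : MvPolynomial σ R}
    (hl : l.IsHomogeneous 1) (hl' : l'.IsHomogeneous 1)
    (h : ∀ q : MvPolynomial σ R, q.IsHomogeneous e → Ψ (l * q) = 0) :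
    Ψ ((l + l') ^ (e + 1)) = Ψ (l' ^ (e + 1)) := by
  set q := ∑ i ∈ Finset.range (e + 1), (l + l') ^ i * l' ^ (e + 1 - 1 - i)
  have hq : q.IsHomogeneous e := IsHomogeneous.sum _ _ _ fun i hi => by
    convert ((hl.add hl').pow i).mul (hl'.pow (e + 1 - 1 - i)) using 1
    have := Finset.mem_range.mp hi
    omega
  have hsplit : (l + l') ^ (e + 1) = l' ^ (e + 1) + l * q := by
    rw [← sub_eq_iff_eq_add', ← geom_sum₂_mul, add_sub_cancel_right, mul_comm]
  rw [hsplit, map_add, h q hq, add_zero]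

variable [Fintype σ]

theorem apply_eq_sum_coeff_mul [DecidableEq σ] {d : ℕ} (Ψ : MvPolynomial σ K →ₗ[K] K)
    {p : MvPolynomial σ K} (hp : p.IsHomogeneous d) :
    Ψ p = ∑ s ∈ Finset.univ.finsuppAntidiag d, coeff s p * Ψ (monomial s 1) := by
  have hsupp : p.support ⊆ Finset.univ.finsuppAntidiag d := fun s hs => by
    rw [Finset.mem_finsuppAntidiag, ← Finsupp.degree_eq_sum]
    refine ⟨by_contra fun hne => mem_support_iff.mp hs (hp.coeff_eq_zero hne), Finset.subset_univ _⟩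
  conv_lhs => rw [p.as_sum, Finset.sum_subset hsupp fun s _ hs => by
    rw [notMem_support_iff.mp hs, monomial_zero]]
  rw [map_sum]
  refine Finset.sum_congr rfl fun s _ => ?_
  rw [← smul_eq_mul, ← map_smul, smul_monomial, smul_eq_mul, mul_one]

theorem eq_zero_of_forall_apply_sum_smul_X_pow [CharZero K] {d : ℕ}
    (Ψ : MvPolynomial σ K →ₗ[K] K) (h : ∀ y : σ → K, Ψ ((∑ i, y i • X i) ^ d) = 0)
    {p : MvPolynomial σ K} (hp : p.IsHomogeneous d) : Ψ p = 0 := by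
  classical
  set S : Finset (σ →₀ ℕ) := Finset.univ.finsuppAntidiag d
  set G := ∑ s ∈ S, monomial s ((s.multinomial : K) * Ψ (monomial s 1))
  have hpow (y : σ → K) : ((∑ i, y i • X i) ^ d : MvPolynomial σ K).IsHomogeneous d := by
    have hlin : (∑ i, y i • X i : MvPolynomial σ K) ∈ homogeneousSubmodule σ K 1 :=
      Submodule.sum_mem _ fun i _ => Submodule.smul_mem _ _ (isHomogeneous_X K i)
    simpa using IsHomogeneous.pow hlin d
  have hG : G = 0 := funext fun y => by
    rw [map_zero, ← h y, apply_eq_sum_coeff_mul Ψ (hpow y), map_sum]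
    refine Finset.sum_congr rfl fun s hs => ?_
    rw [Finset.mem_finsuppAntidiag, ← Finsupp.degree_eq_sum] at hs
    rw [eval_monomial, coeff_linearCombination_X_pow_of_fintype,
      if_pos (show (s.sum fun _ m => m) = d from hs.1)]
    ring
  have hmon (s) (hs : s ∈ S) : Ψ (monomial s 1) = 0 := by
    have := congrArg (coeff s) hG
    rw [coeff_sum, Finset.sum_eq_single s (fun s' _ hs' => by rw [coeff_monomial, if_neg hs'])
      (fun h => (h hs).elim), coeff_monomial, if_pos rfl, coeff_zero] at this
    exact (mul_eq_zero.mp this).resolve_left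
      (Nat.cast_ne_zero.mpr (s.multinomial_eq ▸ Nat.multinomial_pos _ _).ne')
  rw [apply_eq_sum_coeff_mul Ψ hp]
  exact Finset.sum_eq_zero fun s hs => by rw [hmon s hs, mul_zero]

end MvPolynomial

instance formSpace.finiteDimensional (n d : ℕ) : FiniteDimensional ℂ (formSpace n d) :=
  Module.Finite.iff_fg.mpr (homogeneousSubmodule_fg _ _ d)

section LinearForms

variable {n : ℕ}

theorem linForm_mem (c : Fin n → ℂ) : linForm n c ∈ formSpace n 1 :=
  Submodule.sum_mem _ fun i _ => Submodule.smul_mem _ _ (isHomogeneous_X ℂ i)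

theorem linForm_add (c c' : Fin n → ℂ) : linForm n (c + c') = linForm n c + linForm n c' := by
  simp [linForm, add_smul, Finset.sum_add_distrib]

theorem linForm_smul (s : ℂ) (c : Fin n → ℂ) : linForm n (s • c) = s • linForm n c := by
  simp [linForm, Finset.smul_sum, smul_smul]

theorem apply_linForm_pow_eq {e : ℕ} (Ψ : Module.Dual ℂ (PolyR n)) {c : Fin n → ℂ}
    (h : ∀ q ∈ formSpace n e, Ψ (linForm n c * q) = 0) (s μ : ℂ) (v : Fin n → ℂ) :
    Ψ (linForm n (s • c + μ • v) ^ (e + 1)) = μ ^ (e + 1) * Ψ (linForm n v ^ (e + 1)) := by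
  rw [linForm_add, linForm_smul, linForm_smul,
    apply_add_pow_succ_eq Ψ (Submodule.smul_mem _ s (linForm_mem c))
      (Submodule.smul_mem _ μ (linForm_mem v))
      (fun q hq => by rw [smul_mul_assoc, map_smul, h q hq, smul_zero]),
    smul_pow, map_smul, smul_eq_mul]

end LinearForms

section Forms

variable {n k : ℕ}

theorem exists_dotProduct_apply_linForm_pow_ne_zero {d : ℕ} {Φ : PolyR n →ₗ[ℂ] (Fin k → ℂ)}
    (hΦ : (formSpace n d).map Φ = ⊤) {a : Fin k → ℂ} (ha : a ≠ 0) :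
    ∃ v, a ⬝ᵥ Φ (linForm n v ^ d) ≠ 0 := by
  by_contra! h
  refine ha (dotProduct_eq_zero_iff.mp fun x => ?_)
  obtain ⟨p, hp, rfl⟩ : x ∈ (formSpace n d).map Φ := hΦ ▸ Submodule.mem_top
  exact eq_zero_of_forall_apply_sum_smul_X_pow (dotProductEquiv ℂ _ a ∘ₗ Φ) h hp

theorem eq_zero_of_forall_dotProduct_apply_linForm_mul {e : ℕ} {Φ : PolyR n →ₗ[ℂ] (Fin k → ℂ)}
    (hΦ : (formSpace n (e + 1)).map Φ = ⊤) (hk : k ≤ e + 1) {w : Fin k → PolyR n}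
    (hw : ∀ c, ∀ q ∈ formSpace n e, (fun i => eval c (w i)) ⬝ᵥ Φ (linForm n c * q) = 0) :
    w = 0 := by
  by_contra hw0
  obtain ⟨i₀, hi₀⟩ := Function.ne_iff.mp hw0
  obtain ⟨c₀, hc₀⟩ := exists_eval_ne_zero hi₀
  obtain ⟨v, hv⟩ := exists_dotProduct_apply_linForm_pow_ne_zero hΦ
    (a := fun i => eval c₀ (w i)) (Function.ne_iff.mpr ⟨i₀, hc₀⟩)
  set H := ∑ i, C (Φ (linForm n v ^ (e + 1)) i) * w i
  have hH (c : Fin n → ℂ) : eval c H = (fun i => eval c (w i)) ⬝ᵥ Φ (linForm n v ^ (e + 1)) := by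
    simp [H, dotProduct, mul_comm]
  obtain ⟨u, hu⟩ := exists_forall_eval_add_smul_ne_zero (H := H)
    (fun h0 => hv (by rw [← hH, h0, map_zero])) v (fun a : Fin (e + 2) => (a : ℂ))
  set A : Matrix (Fin (e + 2)) (Fin k) ℂ := .of fun a i => eval (u + (a : ℂ) • v) (w i)
  set B : Matrix (Fin k) (Fin (e + 2)) ℂ :=
    .of fun i b => Φ (linForm n ((b : ℂ) • u + v) ^ (e + 1)) i
  have hAB : A * B = .of fun a b => eval (u + (a : ℂ) • v) H * (1 - (a : ℂ) * b) ^ (e + 1) := by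
    ext a b
    have hpt : (b : ℂ) • u + v = (b : ℂ) • (u + (a : ℂ) • v) + (1 - (a : ℂ) * b) • v := by
      module
    have := apply_linForm_pow_eq (dotProductEquiv ℂ _ (fun i => eval (u + (a : ℂ) • v) (w i)) ∘ₗ Φ)
      (hw _) (b : ℂ) (1 - (a : ℂ) * b) v
    simp only [LinearMap.comp_apply, dotProductEquiv_apply_apply] at this
    rw [Matrix.mul_apply, Matrix.of_apply, hH, mul_comm, ← this, ← hpt]
    rfl
  have hdet : (A * B).det ≠ 0 := by
    rw [hAB]
    refine (Matrix.det_mul_column (fun a : Fin (e + 2) => eval (u + (a : ℂ) • v) H)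
      (.of fun a b : Fin (e + 2) => (1 - (a : ℂ) * b) ^ (e + 1))).trans_ne ?_
    exact mul_ne_zero (Finset.prod_ne_zero_iff.mpr fun a _ => hu a)
      (Matrix.det_one_sub_mul_pow_ne_zero (Nat.cast_injective.comp Fin.val_injective)
        (Nat.cast_injective.comp Fin.val_injective))
  have := Matrix.card_le_of_det_mul_ne_zero hdet
  simp only [Fintype.card_fin] at this
  omega

theorem exists_ne_zero_surjective_comp_mulLeft_linForm {e : ℕ} {Φ : PolyR n →ₗ[ℂ] (Fin k → ℂ)}
    (hΦ : (formSpace n (e + 1)).map Φ = ⊤) (hk : k ≤ e + 1) :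
    ∃ P : PolyR n, P ≠ 0 ∧ ∀ c, eval c P ≠ 0 →
      Function.Surjective (Φ ∘ₗ LinearMap.mulLeft ℂ (linForm n c) ∘ₗ (formSpace n e).subtype) := by
  set β := Module.finBasis ℂ (formSpace n e)
  set M : Matrix (Fin k) _ (PolyR n) := .of fun i j => ∑ t, C (Φ (X t * (β j : PolyR n)) i) * X t
  have hM (c : Fin n → ℂ) (i j) : eval c (M i j) = Φ (linForm n c * β j) i := by
    simp [M, linForm, Finset.sum_mul, mul_comm]
  have hind : LinearIndependent (PolyR n) M.row := by
    rw [Fintype.linearIndependent_iff]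
    intro g hg
    refine congrFun (eq_zero_of_forall_dotProduct_apply_linForm_mul hΦ hk fun c q hq => ?_)
    have hcol (j) : (fun i => eval c (g i)) ⬝ᵥ Φ (linForm n c * β j) = 0 := by
      simpa [Finset.sum_apply, dotProduct, hM] using congrArg (eval c) (congrFun hg j)
    have hL : dotProductEquiv ℂ _ (fun i => eval c (g i)) ∘ₗ Φ ∘ₗ
        LinearMap.mulLeft ℂ (linForm n c) ∘ₗ (formSpace n e).subtype = 0 :=
      β.ext fun j => hcol j
    exact LinearMap.congr_fun hL ⟨q, hq⟩
  obtain ⟨P, hP, hsurj⟩ := Matrix.exists_ne_zero_forall_eval_ne_zero_surjective_mulVec hind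
  refine ⟨P, hP, fun c hc x => ?_⟩
  obtain ⟨y, rfl⟩ := hsurj c hc x
  refine ⟨∑ j, y j • β j, funext fun i => ?_⟩
  simp [Matrix.mulVec, dotProduct, hM, mul_comm]

end Forms

theorem stmt11_general (n d k : ℕ) (hd : 2 ≤ d) (hkd : k ≤ d)
    (U : Submodule ℂ (PolyR n)) (hU : U ≤ formSpace n d)
    (hcodim : vcodim n d U = k) :
    ∃ P : MvPolynomial (Fin n) ℂ, P ≠ 0 ∧ ∀ c : Fin n → ℂ, eval c P ≠ 0 →
      U ⊔ Submodule.span ℂ {linForm n c} * formSpace n (d - 1) = formSpace n d ∧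
      vcodim n (d - 1) (colon n d U (linForm n c)) = k := by
  obtain ⟨e, rfl⟩ : ∃ e, d = e + 1 := ⟨d - 1, by omega⟩
  obtain ⟨Φ, hker, hmap⟩ := Submodule.exists_ker_inf_eq_map_eq_top hU hcodim
  obtain ⟨P, hP, hsurj⟩ := exists_ne_zero_surjective_comp_mulLeft_linForm hmap hkd
  refine ⟨P, hP, fun c hc => ?_⟩
  have hlE : Submodule.span ℂ {linForm n c} * formSpace n e ≤ formSpace n (e + 1) := by
    rw [Submodule.span_singleton_mul]
    rintro _ ⟨q, hq, rfl⟩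
    have := IsHomogeneous.mul (linForm_mem c) hq
    rwa [add_comm] at this
  exact ⟨sup_span_singleton_mul_eq hker hlE (hsurj c hc),
    finrank_sub_finrank_comap_mulLeft_inf hker hlE (hsurj c hc)⟩

theorem stmt11 (n d k : ℕ) (hn : 2 ≤ n) (hd : 2 ≤ d) (hkd : k ≤ d)
    (U : Submodule ℂ (PolyR n)) (hU : U ≤ formSpace n d)
    (hcodim : vcodim n d U = k) :
    ∃ P : MvPolynomial (Fin n) ℂ, P ≠ 0 ∧ ∀ c : Fin n → ℂ, eval c P ≠ 0 →
      U ⊔ Submodule.span ℂ {linForm n c} * formSpace n (d - 1) = formSpace n d ∧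
      vcodim n (d - 1) (colon n d U (linForm n c)) = k :=
  stmt11_general n d k hd hkd U hU hcodim
end

section
/- Let U ⊆ A(n)_d be a linear subspace of codimension k and let H = (h_i) be the Hilbert function of the ideal ⟨U⟩ ⊆ A(n). Then for every l ≥ 0: (i) the Hilbert function K = (k_i) of the ideal generated by U^(l) in A(n+l) satisfies k_i = dim A(n+l)_i for 0 ≤ i ≤ d−1 and k_i = h_i for i ≥ d; (ii) codim_{A(n+l)_{2d}} (U^(l))² = codim_{A(n)_{2d}} U² + l·h_{2d−1}. -/
open MvPolynomial Module

/-- One-step lifting `U ↦ U⁽¹⁾ = x_{n+1}·A(n+1)_{d-1} ⊕ U ⊆ A(n+1)_d`. -/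
noncomputable def lift1 (n d : ℕ) (U : Submodule ℂ (PolyR n)) :
    Submodule ℂ (PolyR (n + 1)) :=
  Submodule.span ℂ {(X (Fin.last n) : PolyR (n + 1))} * formSpace (n + 1) (d - 1) ⊔
    Submodule.map (MvPolynomial.rename (Fin.castSucc : Fin n → Fin (n + 1))).toLinearMap U

/-- Iterated lifting `U⁽ˡ⁾ ⊆ A(n+l)_d`. -/
noncomputable def liftIter (n d : ℕ) (U : Submodule ℂ (PolyR n)) :
    (l : ℕ) → Submodule ℂ (PolyR (n + l))
  | 0 => U
  | l + 1 => lift1 (n + l) d (liftIter n d U l)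

/-- The degree-`i` component of a homogeneous ideal, as a `ℂ`-subspace. -/
noncomputable def idealComp (n : ℕ) (I : Ideal (PolyR n)) (i : ℕ) :
    Submodule ℂ (PolyR n) :=
  Submodule.restrictScalars ℂ I ⊓ formSpace n i

/-- The Hilbert function `h_I(i) = dim (A/I)_i`. -/
noncomputable def hilb (n : ℕ) (I : Ideal (PolyR n)) (i : ℕ) : ℕ :=
  finrank ℂ (formSpace n i) - finrank ℂ (idealComp n I i)

/-!
Write `x` for the new variable and `ι : A(n) → A(n+1)` for the inclusion. Every form of degree
`i ≥ 1` in `A(n+1)` splits uniquely as `x·g + ι f`, so `A(n+1)_i = x·A(n+1)_{i-1} ⊕ ι A(n)_i`.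
For `i ≥ d` the degree-`i` part of `⟨U⁽¹⁾⟩` is `A_{i-d}·U⁽¹⁾ = x·A(n+1)_{i-1} ⊕ ι(A(n)_{i-d}·U)`,
so it has the same codimension as `⟨U⟩_i`, while below degree `d` the ideal is zero. Similarly
`(U⁽¹⁾)² = x·⟨U⁽¹⁾⟩_{2d-1} ⊕ ι(U²)`, so passing to `U⁽¹⁾` adds `h_{2d-1}` to the codimension of
the square. Induction on `l` gives the theorem.
-/

section Homogeneous

variable {σ R : Type*} [CommSemiring R]

attribute [local instance] MvPolynomial.gradedAlgebra in
theorem homogeneousComponent_mul_of_mem {p q : MvPolynomial σ R} {d : ℕ}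
    (hq : q ∈ homogeneousSubmodule σ R d) (i : ℕ) :
    homogeneousComponent i (p * q) =
      if d ≤ i then homogeneousComponent (i - d) p * q else 0 := by
  have hdec : ∀ (φ : MvPolynomial σ R) (j : ℕ),
      homogeneousComponent j φ = (DirectSum.decompose (homogeneousSubmodule σ R) φ j : _) :=
    fun φ j => (decomposition.decompose'_apply φ j).symm
  rw [hdec, hdec]
  exact DirectSum.coe_decompose_mul_of_right_mem (homogeneousSubmodule σ R) i hq

theorem homogeneousComponent_mem_of_mem_span {d i : ℕ} {U : Submodule R (MvPolynomial σ R)}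
    (hU : U ≤ homogeneousSubmodule σ R d) {p : MvPolynomial σ R}
    (hp : p ∈ Ideal.span (U : Set (MvPolynomial σ R))) :
    homogeneousComponent i p ∈
      if d ≤ i then homogeneousSubmodule σ R (i - d) * U else ⊥ := by
  obtain ⟨k, f, g, rfl⟩ := Submodule.mem_span_set'.mp hp
  rw [map_sum]
  refine Submodule.sum_mem _ fun j _ => ?_
  rw [smul_eq_mul, homogeneousComponent_mul_of_mem (hU (g j).2)]
  split_ifs
  · exact Submodule.mul_mem_mul (homogeneousComponent_mem _ _) (g j).2
  · exact Submodule.zero_mem _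

end Homogeneous

instance (n i : ℕ) : FiniteDimensional ℂ (formSpace n i) :=
  Module.Finite.iff_fg.mpr (homogeneousSubmodule_fg _ _ _)

theorem formSpace_zero (n : ℕ) : formSpace n 0 = 1 :=
  homogeneousSubmodule_zero _

theorem formSpace_mul {n a b c : ℕ} (h : a + b = c) :
    formSpace n a * formSpace n b = formSpace n c := by
  rw [← h, formSpace, formSpace, formSpace, ← homogeneousSubmodule_one_pow _ (a + b), pow_add,
    homogeneousSubmodule_one_pow, homogeneousSubmodule_one_pow]

theorem mul_le_formSpace_s14 {n a b c : ℕ} {V W : Submodule ℂ (PolyR n)} (hV : V ≤ formSpace n a)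
    (hW : W ≤ formSpace n b) (h : a + b = c) : V * W ≤ formSpace n c :=
  formSpace_mul h ▸ mul_le_mul' hV hW

theorem hilb_eq_vcodim (n : ℕ) (I : Ideal (PolyR n)) (i : ℕ) :
    hilb n I i = vcodim n i (idealComp n I i) := rfl

theorem idealComp_le (n : ℕ) (I : Ideal (PolyR n)) (i : ℕ) : idealComp n I i ≤ formSpace n i :=
  inf_le_right

section IdealSpan

variable {n d i : ℕ} {U : Submodule ℂ (PolyR n)}

theorem idealComp_span_of_lt (hU : U ≤ formSpace n d) (hi : i < d) :
    idealComp n (Ideal.span U) i = ⊥ := by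
  refine eq_bot_iff.mpr fun p ⟨hpI, hp⟩ => ?_
  have := homogeneousComponent_mem_of_mem_span (i := i) hU hpI
  rwa [if_neg (not_le.mpr hi), homogeneousComponent_of_mem hp, if_pos rfl] at this

theorem idealComp_span_of_le (hU : U ≤ formSpace n d) (hi : d ≤ i) :
    idealComp n (Ideal.span U) i = formSpace n (i - d) * U := by
  refine le_antisymm (fun p ⟨hpI, hp⟩ => ?_) (le_inf ?_ (mul_le_formSpace_s14 le_rfl hU (by omega)))
  · exact Submodule.mul_le.mpr fun f _ u hu => Ideal.mul_mem_left _ f (Ideal.subset_span hu)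
  · have := homogeneousComponent_mem_of_mem_span (i := i) hU hpI
    rwa [if_pos hi, homogeneousComponent_of_mem hp, if_pos rfl] at this

theorem hilb_span_of_lt (hU : U ≤ formSpace n d) (hi : i < d) :
    hilb n (Ideal.span U) i = finrank ℂ (formSpace n i) := by
  rw [hilb, idealComp_span_of_lt hU hi, finrank_bot, Nat.sub_zero]

end IdealSpan

section Lift

variable {n : ℕ}

noncomputable def renameCastSucc (n : ℕ) : PolyR n →ₐ[ℂ] PolyR (n + 1) :=
  rename Fin.castSucc

noncomputable def lastVarSpan (n : ℕ) : Submodule ℂ (PolyR (n + 1)) :=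
  Submodule.span ℂ {X (Fin.last n)}

theorem lift1_eq (d : ℕ) (U : Submodule ℂ (PolyR n)) :
    lift1 n d U =
      lastVarSpan n * formSpace (n + 1) (d - 1) ⊔ U.map (renameCastSucc n).toLinearMap :=
  rfl

theorem map_renameCastSucc_le {i : ℕ} {V : Submodule ℂ (PolyR n)} (hV : V ≤ formSpace n i) :
    V.map (renameCastSucc n).toLinearMap ≤ formSpace (n + 1) i := by
  rintro _ ⟨q, hq, rfl⟩
  exact (hV hq).rename_isHomogeneous

theorem lastVarSpan_le : lastVarSpan n ≤ formSpace (n + 1) 1 :=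
  Submodule.span_le.mpr (Set.singleton_subset_iff.mpr (isHomogeneous_X _ _))

theorem lastVarSpan_mul_eq_map (W : Submodule ℂ (PolyR (n + 1))) :
    lastVarSpan n * W = W.map (LinearMap.mulLeft ℂ (X (Fin.last n))) := by
  ext p
  exact Submodule.mem_span_singleton_mul

theorem disjoint_map_renameCastSucc_lastVarSpan_mul (V : Submodule ℂ (PolyR n))
    (W : Submodule ℂ (PolyR (n + 1))) :
    Disjoint (V.map (renameCastSucc n).toLinearMap) (lastVarSpan n * W) := by
  rw [Submodule.disjoint_def]
  rintro _ ⟨q, -, rfl⟩ hq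
  obtain ⟨w, -, hw⟩ := Submodule.mem_span_singleton_mul.mp hq
  -- setting the last variable to zero is a left inverse of `renameCastSucc` and kills `X last * w`
  have hq0 : q = 0 := by
    have h := congrArg (bind₁ (Fin.snoc X 0 : Fin (n + 1) → PolyR n)) hw
    simpa [renameCastSucc, bind₁_rename, Function.comp_def] using h.symm
  simp [hq0]

theorem finrank_lastVarSpan_mul_sup_map (W : Submodule ℂ (PolyR (n + 1)))
    (V : Submodule ℂ (PolyR n)) [FiniteDimensional ℂ W] [FiniteDimensional ℂ V] :
    finrank ℂ (lastVarSpan n * W ⊔ V.map (renameCastSucc n).toLinearMap : Submodule ℂ _) =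
      finrank ℂ W + finrank ℂ V := by
  have hmul : finrank ℂ (lastVarSpan n * W : Submodule ℂ _) = finrank ℂ W := by
    rw [lastVarSpan_mul_eq_map]
    exact (LinearEquiv.finrank_eq
      (Submodule.equivMapOfInjective _ (mul_right_injective₀ (X_ne_zero _)) W)).symm
  have hren : finrank ℂ (V.map (renameCastSucc n).toLinearMap) = finrank ℂ V :=
    (LinearEquiv.finrank_eq (Submodule.equivMapOfInjective _
      (rename_injective _ (Fin.castSucc_injective n)) V)).symm
  have : FiniteDimensional ℂ (lastVarSpan n * W : Submodule ℂ _) := by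
    rw [lastVarSpan_mul_eq_map]; infer_instance
  have h := Submodule.finrank_sup_add_finrank_inf_eq (lastVarSpan n * W)
    (V.map (renameCastSucc n).toLinearMap)
  rwa [(disjoint_map_renameCastSucc_lastVarSpan_mul V W).symm.eq_bot, finrank_bot, add_zero,
    hmul, hren] at h

theorem formSpace_succ_one :
    formSpace (n + 1) 1 = (formSpace n 1).map (renameCastSucc n).toLinearMap ⊔ lastVarSpan n := by
  rw [formSpace, formSpace, homogeneousSubmodule_one_eq_span_X, homogeneousSubmodule_one_eq_span_X,
    Submodule.map_span, lastVarSpan, ← Submodule.span_union]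
  congr 1
  ext p
  simp [renameCastSucc, Fin.exists_fin_succ', eq_comm, or_comm]

theorem formSpace_succ_succ_le (i : ℕ) :
    formSpace (n + 1) (i + 1) ≤
      (formSpace n (i + 1)).map (renameCastSucc n).toLinearMap ⊔
        lastVarSpan n * formSpace (n + 1) i := by
  induction i with
  | zero => rw [formSpace_succ_one, formSpace_zero, mul_one]
  | succ i ih =>
    rw [← formSpace_mul (add_comm 1 (i + 1)), formSpace_succ_one, Submodule.sup_mul]
    refine sup_le ?_ le_sup_right
    calc (formSpace n 1).map (renameCastSucc n).toLinearMap * formSpace (n + 1) (i + 1)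
        ≤ (formSpace n 1).map (renameCastSucc n).toLinearMap *
            ((formSpace n (i + 1)).map (renameCastSucc n).toLinearMap ⊔
              lastVarSpan n * formSpace (n + 1) i) := mul_le_mul' le_rfl ih
      _ = (formSpace n 1 * formSpace n (i + 1)).map (renameCastSucc n).toLinearMap ⊔
            lastVarSpan n *
              ((formSpace n 1).map (renameCastSucc n).toLinearMap * formSpace (n + 1) i) := by
        rw [Submodule.mul_sup, Submodule.map_mul, mul_left_comm]
      _ ≤ (formSpace n (i + 1 + 1)).map (renameCastSucc n).toLinearMap ⊔
            lastVarSpan n * formSpace (n + 1) (i + 1) := by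
        rw [formSpace_mul (add_comm 1 (i + 1))]
        exact sup_le_sup_left (mul_le_mul' le_rfl
          (mul_le_formSpace_s14 (map_renameCastSucc_le le_rfl) le_rfl (add_comm 1 i))) _

theorem formSpace_succ_eq {i : ℕ} (hi : i ≠ 0) :
    formSpace (n + 1) i =
      lastVarSpan n * formSpace (n + 1) (i - 1) ⊔
        (formSpace n i).map (renameCastSucc n).toLinearMap := by
  obtain ⟨j, rfl⟩ := Nat.exists_eq_add_one_of_ne_zero hi
  refine le_antisymm ((formSpace_succ_succ_le j).trans_eq (sup_comm _ _)) (sup_le ?_ ?_)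
  · exact mul_le_formSpace_s14 lastVarSpan_le le_rfl (by omega)
  · exact map_renameCastSucc_le le_rfl

theorem vcodim_lastVarSpan_mul_sup_map {i : ℕ} (hi : i ≠ 0) {W : Submodule ℂ (PolyR (n + 1))}
    {V : Submodule ℂ (PolyR n)} (hW : W ≤ formSpace (n + 1) (i - 1)) (hV : V ≤ formSpace n i) :
    vcodim (n + 1) i (lastVarSpan n * W ⊔ V.map (renameCastSucc n).toLinearMap) =
      vcodim (n + 1) (i - 1) W + vcodim n i V := by
  have : FiniteDimensional ℂ W := Submodule.finiteDimensional_of_le hW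
  have : FiniteDimensional ℂ V := Submodule.finiteDimensional_of_le hV
  have hdim := finrank_lastVarSpan_mul_sup_map (formSpace (n + 1) (i - 1)) (formSpace n i)
  rw [← formSpace_succ_eq hi] at hdim
  have hW' := Submodule.finrank_mono hW
  have hV' := Submodule.finrank_mono hV
  rw [vcodim, vcodim, vcodim, finrank_lastVarSpan_mul_sup_map, hdim]
  omega

variable {d : ℕ} {U : Submodule ℂ (PolyR n)}

theorem lift1_le (hU : U ≤ formSpace n d) (hd : d ≠ 0) : lift1 n d U ≤ formSpace (n + 1) d :=
  sup_le (mul_le_formSpace_s14 lastVarSpan_le le_rfl (by omega)) (map_renameCastSucc_le hU)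

theorem idealComp_span_lift1 (hU : U ≤ formSpace n d) (hd : d ≠ 0) {i : ℕ} (hi : d ≤ i) :
    idealComp (n + 1) (Ideal.span (lift1 n d U)) i =
      lastVarSpan n * formSpace (n + 1) (i - 1) ⊔
        (idealComp n (Ideal.span U) i).map (renameCastSucc n).toLinearMap := by
  rw [idealComp_span_of_le (lift1_le hU hd) hi, idealComp_span_of_le hU hi, lift1_eq,
    Submodule.mul_sup, mul_left_comm, formSpace_mul (by omega : i - d + (d - 1) = i - 1),
    Submodule.map_mul]
  refine le_antisymm (sup_le le_sup_left ?_)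
    (sup_le_sup_left (mul_le_mul' (map_renameCastSucc_le le_rfl) le_rfl) _)
  by_cases h : i - d = 0
  · rw [h, formSpace_zero, formSpace_zero, Submodule.map_one, one_mul]
    exact le_sup_right
  · rw [formSpace_succ_eq h, Submodule.sup_mul, mul_assoc]
    exact sup_le_sup_right (mul_le_mul' le_rfl
      (mul_le_formSpace_s14 le_rfl (map_renameCastSucc_le hU) (by omega))) _

theorem hilb_span_lift1 (hU : U ≤ formSpace n d) (hd : d ≠ 0) {i : ℕ} (hi : d ≤ i) :
    hilb (n + 1) (Ideal.span (lift1 n d U)) i = hilb n (Ideal.span U) i := by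
  rw [hilb_eq_vcodim, idealComp_span_lift1 hU hd hi,
    vcodim_lastVarSpan_mul_sup_map (by omega) le_rfl (idealComp_le _ _ _), vcodim, Nat.sub_self,
    zero_add, hilb_eq_vcodim]

theorem lift1_mul_self (hU : U ≤ formSpace n d) (hd : d ≠ 0) :
    lift1 n d U * lift1 n d U =
      lastVarSpan n * idealComp (n + 1) (Ideal.span (lift1 n d U)) (2 * d - 1) ⊔
        (U * U).map (renameCastSucc n).toLinearMap := by
  rw [idealComp_span_of_le (lift1_le hU hd) (by omega), show 2 * d - 1 - d = d - 1 by omega]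
  set L := lift1 n d U
  set U' := U.map (renameCastSucc n).toLinearMap
  have hL : L = lastVarSpan n * formSpace (n + 1) (d - 1) ⊔ U' := rfl
  have hU'L : U' * L = lastVarSpan n * (formSpace (n + 1) (d - 1) * U') ⊔ U' * U' := by
    rw [hL, Submodule.mul_sup, mul_left_comm, mul_comm U']
  have hmixed : lastVarSpan n * (formSpace (n + 1) (d - 1) * U') ≤
      lastVarSpan n * (formSpace (n + 1) (d - 1) * L) :=
    mul_le_mul' le_rfl (mul_le_mul' le_rfl le_sup_right)
  calc L * L = lastVarSpan n * (formSpace (n + 1) (d - 1) * L) ⊔ U' * L := by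
        nth_rewrite 1 [hL]
        rw [Submodule.sup_mul, mul_assoc]
    _ = lastVarSpan n * (formSpace (n + 1) (d - 1) * L) ⊔ U' * U' := by
        rw [hU'L, ← sup_assoc, sup_eq_left.mpr hmixed]
    _ = _ := by rw [Submodule.map_mul]

theorem vcodim_lift1_mul_self (hU : U ≤ formSpace n d) (hd : d ≠ 0) :
    vcodim (n + 1) (2 * d) (lift1 n d U * lift1 n d U) =
      vcodim n (2 * d) (U * U) + hilb n (Ideal.span U) (2 * d - 1) := by
  rw [lift1_mul_self hU hd, vcodim_lastVarSpan_mul_sup_map (by omega) (idealComp_le _ _ _)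
    (mul_le_formSpace_s14 hU hU (two_mul d).symm), ← hilb_eq_vcodim, hilb_span_lift1 hU hd (by omega),
    add_comm]

end Lift

section Iterate

variable {n d : ℕ} {U : Submodule ℂ (PolyR n)}

theorem liftIter_le (hU : U ≤ formSpace n d) (hd : d ≠ 0) :
    ∀ l, liftIter n d U l ≤ formSpace (n + l) d
  | 0 => hU
  | l + 1 => lift1_le (liftIter_le hU hd l) hd

theorem hilb_span_liftIter (hU : U ≤ formSpace n d) (hd : d ≠ 0) {i : ℕ} (hi : d ≤ i) :
    ∀ l, hilb (n + l) (Ideal.span (liftIter n d U l)) i = hilb n (Ideal.span U) i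
  | 0 => rfl
  | l + 1 => (hilb_span_lift1 (liftIter_le hU hd l) hd hi).trans (hilb_span_liftIter hU hd hi l)

theorem vcodim_liftIter_mul_self (hU : U ≤ formSpace n d) (hd : d ≠ 0) :
    ∀ l, vcodim (n + l) (2 * d) (liftIter n d U l * liftIter n d U l) =
      vcodim n (2 * d) (U * U) + l * hilb n (Ideal.span U) (2 * d - 1)
  | 0 => by
    show vcodim n (2 * d) (U * U) = _
    rw [zero_mul, add_zero]
  | l + 1 => by
    show vcodim (n + l + 1) (2 * d)
      (lift1 (n + l) d (liftIter n d U l) * lift1 (n + l) d (liftIter n d U l)) = _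
    rw [vcodim_lift1_mul_self (liftIter_le hU hd l) hd, vcodim_liftIter_mul_self hU hd l,
      hilb_span_liftIter hU hd (by omega) l]
    ring

end Iterate

theorem stmt14_general (n d : ℕ) (hd : 2 ≤ d)
    (U : Submodule ℂ (PolyR n)) (hU : U ≤ formSpace n d) :
    ∀ l : ℕ,
      ((∀ i : ℕ, i ≤ d - 1 →
          hilb (n + l) (Ideal.span (liftIter n d U l : Set (PolyR (n + l)))) i =
            finrank ℂ (formSpace (n + l) i)) ∧
       (∀ i : ℕ, d ≤ i →
          hilb (n + l) (Ideal.span (liftIter n d U l : Set (PolyR (n + l)))) i =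
            hilb n (Ideal.span (U : Set (PolyR n))) i)) ∧
      vcodim (n + l) (2 * d) (liftIter n d U l * liftIter n d U l) =
        vcodim n (2 * d) (U * U) +
          l * hilb n (Ideal.span (U : Set (PolyR n))) (2 * d - 1) := by
  intro l
  have hd0 : d ≠ 0 := by omega
  exact ⟨⟨fun i hi => hilb_span_of_lt (liftIter_le hU hd0 l) (by omega),
    fun i hi => hilb_span_liftIter hU hd0 hi l⟩, vcodim_liftIter_mul_self hU hd0 l⟩

theorem stmt14 (n d k : ℕ) (hn : 2 ≤ n) (hd : 2 ≤ d)
    (U : Submodule ℂ (PolyR n)) (hU : U ≤ formSpace n d)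
    (hcodim : vcodim n d U = k) :
    ∀ l : ℕ,
      ((∀ i : ℕ, i ≤ d - 1 →
          hilb (n + l) (Ideal.span (liftIter n d U l : Set (PolyR (n + l)))) i =
            finrank ℂ (formSpace (n + l) i)) ∧
       (∀ i : ℕ, d ≤ i →
          hilb (n + l) (Ideal.span (liftIter n d U l : Set (PolyR (n + l)))) i =
            hilb n (Ideal.span (U : Set (PolyR n))) i)) ∧
      vcodim (n + l) (2 * d) (liftIter n d U l * liftIter n d U l) =
        vcodim n (2 * d) (U * U) +
          l * hilb n (Ideal.span (U : Set (PolyR n))) (2 * d - 1) :=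
  stmt14_general n d hd U hU
end

section
/- Let U ⊆ A(n)_d be a linear subspace of codimension k with k ≤ n. Then for a generic k-tuple (l₁,…,l_k) of linearly independent linear forms in A₁, the intersection U ∩ ℂ[l₁,…,l_k]_d has codimension k inside ℂ[l₁,…,l_k]_d, the space of degree-d forms in l₁,…,l_k. In particular, after a generic linear change of coordinates, U ∩ A(k)_d has codimension k in A(k)_d. -/
open MvPolynomial Module

/-!
Choose a linear map `ψ : A(n) → ℂᵏ` that is onto on `A(n)_d` and whose kernel there is `U`.
Since `d`-th powers of linear forms span `A(n)_d` (characteristic zero), some tuple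
`l₁, …, l_k` has `det [ψ(lᵢ^d)] ≠ 0`, and this determinant is a polynomial `G` in the
coefficients of the `lᵢ`. Whenever `G ≠ 0`, the powers `lᵢ^d ∈ ℂ[l₁, …, l_k]_d` already map
onto `ℂᵏ`, so `ℂ[l]_d + U = A(n)_d` and `U ∩ ℂ[l]_d` has codimension `k` in `ℂ[l]_d`.
Multiplying `G` by a `k × k` minor of the coefficient matrix also makes the `lᵢ` independent.
-/

section LinearAlgebra

variable {K M : Type*} [Field K] [AddCommGroup M] [Module K M]

theorem Submodule.exists_linearMap_map_eq_top_ker_inf_eq {U F : Submodule K M}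
    [FiniteDimensional K F] (hUF : U ≤ F) {k : ℕ} (hk : finrank K F - finrank K U = k) :
    ∃ ψ : M →ₗ[K] (Fin k → K), F.map ψ = ⊤ ∧ LinearMap.ker ψ ⊓ F = U := by
  set U' := U.comap F.subtype
  have hQ : finrank K (F ⧸ U') = k := by
    rw [← hk, ← (Submodule.comapSubtypeEquivOfLe hUF).finrank_eq,
      ← Submodule.finrank_quotient_add_finrank U', Nat.add_sub_cancel]
  let f : F →ₗ[K] (Fin k → K) := (finBasisOfFinrankEq K _ hQ).equivFun.toLinearMap ∘ₗ U'.mkQ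
  obtain ⟨ψ, hψ⟩ := LinearMap.exists_extend f
  refine ⟨ψ, ?_, ?_⟩
  · rw [← Submodule.range_subtype F, ← LinearMap.range_comp, hψ, LinearMap.range_eq_top]
    exact (finBasisOfFinrankEq K _ hQ).equivFun.surjective.comp U'.mkQ_surjective
  · have hker : LinearMap.ker f = U' := by simp [f, LinearEquiv.ker_comp]
    ext x
    refine ⟨fun ⟨hx, hxF⟩ => ?_, fun hx => ⟨?_, hUF hx⟩⟩
    · have hfx : (⟨x, hxF⟩ : F) ∈ LinearMap.ker f := by rwa [LinearMap.mem_ker, ← hψ]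
      rwa [hker] at hfx
    · have hfx : (⟨x, hUF hx⟩ : F) ∈ LinearMap.ker f := hker ▸ hx
      rwa [LinearMap.mem_ker, ← hψ] at hfx

theorem Submodule.le_sup_of_map_le_map {N : Type*} [AddCommGroup N] [Module K N]
    {U W F : Submodule K M} {ψ : M →ₗ[K] N} (hWF : W ≤ F) (hψ : LinearMap.ker ψ ⊓ F = U)
    (hmap : F.map ψ ≤ W.map ψ) : F ≤ W ⊔ U := by
  rw [LinearMap.map_le_map_iff] at hmap
  rw [← hψ, ← sup_inf_assoc_of_le _ hWF]
  exact le_inf hmap le_rfl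

theorem Submodule.finrank_sub_finrank_inf_eq_of_le_sup {U W F : Submodule K M}
    [FiniteDimensional K F] (hUF : U ≤ F) (hWF : W ≤ F) (hF : F ≤ W ⊔ U) :
    finrank K W - finrank K ↥(U ⊓ W) = finrank K F - finrank K U := by
  have : FiniteDimensional K U := Submodule.finiteDimensional_of_le hUF
  have : FiniteDimensional K W := Submodule.finiteDimensional_of_le hWF
  have hsup : W ⊔ U = F := le_antisymm (sup_le hWF hUF) hF
  have := Submodule.finrank_sup_add_finrank_inf_eq W U
  rw [hsup, inf_comm] at this
  omega

theorem map_span_eq_top_of_det_ne_zero {k : ℕ} (ψ : M →ₗ[K] (Fin k → K)) (v : Fin k → M)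
    (hv : (Matrix.of fun i => ψ (v i)).det ≠ 0) : (Submodule.span K (Set.range v)).map ψ = ⊤ := by
  rw [Submodule.map_span, ← Set.range_comp]
  exact (Matrix.linearIndependent_rows_of_det_ne_zero hv).span_eq_top_of_card_eq_finrank' (by simp)

theorem exists_det_ne_zero_of_span_eq_top {k : ℕ} {s : Set (Fin k → K)}
    (hs : Submodule.span K s = ⊤) :
    ∃ v : Fin k → Fin k → K, (∀ i, v i ∈ s) ∧ (Matrix.of v).det ≠ 0 := by
  let b := Basis.ofSpan hs.ge
  let e := (Pi.basisFun K (Fin k)).indexEquiv b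
  refine ⟨fun i => b (e i), fun i => Basis.ofSpan_subset hs.ge ⟨_, rfl⟩, ?_⟩
  rw [← isUnit_iff_ne_zero, ← Matrix.isUnit_iff_isUnit_det,
    ← Matrix.linearIndependent_rows_iff_isUnit]
  exact b.linearIndependent.comp e e.injective

end LinearAlgebra

theorem Submodule.mem_of_forall_sum_pow_smul_mem {K M : Type*} [Field K] [CharZero K]
    [AddCommGroup M] [Module K M] (S : Submodule K M) {N : ℕ} (w : Fin N → M)
    (h : ∀ t : K, ∑ s : Fin N, t ^ (s : ℕ) • w s ∈ S) (s : Fin N) : w s ∈ S := by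
  rw [← Submodule.Quotient.mk_eq_zero, ← Module.forall_dual_apply_eq_zero_iff K]
  intro φ
  have hinj : Function.Injective fun i : Fin N => (i : K) :=
    Nat.cast_injective.comp Fin.val_injective
  refine congrFun (Matrix.eq_zero_of_forall_index_sum_pow_mul_eq_zero
    (v := fun s => φ (S.mkQ (w s))) hinj fun j => ?_) s
  have hj : φ (S.mkQ (∑ s : Fin N, (j : K) ^ (s : ℕ) • w s)) = 0 := by
    rw [Submodule.mkQ_apply, (Submodule.Quotient.mk_eq_zero S).mpr (h j), map_zero]
  simpa only [map_sum, map_smul, smul_eq_mul] using hj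

theorem Submodule.mul_pow_mul_mem_of_forall_add_smul_pow_mul_mem {K A : Type*} [Field K]
    [CharZero K] [CommRing A] [Algebra K A] (S : Submodule K A) (x l f : A) (m : ℕ)
    (h : ∀ t : K, (l + t • x) ^ (m + 1) * f ∈ S) : x * l ^ m * f ∈ S := by
  let w : Fin (m + 2) → A :=
    fun s => ((m + 1).choose s : K) • (x ^ (s : ℕ) * l ^ (m + 1 - s) * f)
  have hw : ∀ t : K, ∑ s : Fin _, t ^ (s : ℕ) • w s = (l + t • x) ^ (m + 1) * f := by
    intro t
    rw [add_comm l, add_pow, Finset.sum_mul, ← Fin.sum_univ_eq_sum_range]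
    refine Finset.sum_congr rfl fun s _ => ?_
    simp only [w, Algebra.smul_def, map_pow, map_natCast]
    ring
  -- the coefficient of `t` is `(m + 1) • (x * l ^ m * f)`
  have h1 := S.mem_of_forall_sum_pow_smul_mem w (fun t => hw t ▸ h t) 1
  simpa [w, Submodule.smul_mem_iff _ (Nat.cast_add_one_ne_zero m : ((m : K) + 1) ≠ 0)] using h1

theorem MvPolynomial.exists_eval_eq_linearMap_map_eval {K σ τ : Type*} [CommRing K]
    (ψ : MvPolynomial σ K →ₗ[K] K) (G : MvPolynomial σ (MvPolynomial τ K)) :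
    ∃ E : MvPolynomial τ K, ∀ c, eval c E = ψ (map (eval c) G) := by
  induction G using MvPolynomial.induction_on' with
  | monomial β a =>
    refine ⟨ψ (monomial β 1) • a, fun c => ?_⟩
    have : monomial β (eval c a) = eval c a • monomial β (1 : K) := by
      rw [smul_monomial, smul_eq_mul, mul_one]
    rw [map_monomial, this, smul_eval, ψ.map_smul, smul_eq_mul, mul_comm]
  | add p q hp hq =>
    obtain ⟨Ep, hEp⟩ := hp
    obtain ⟨Eq, hEq⟩ := hq
    exact ⟨Ep + Eq, fun c => by simp [hEp, hEq]⟩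

theorem MvPolynomial.exists_ne_zero_linearIndependent_of_eval_ne_zero (K : Type*) [Field K]
    {k n : ℕ} (hkn : k ≤ n) :
    ∃ P : MvPolynomial (Fin k × Fin n) K, P ≠ 0 ∧ ∀ c : Fin k → Fin n → K,
      eval (fun p => c p.1 p.2) P ≠ 0 → LinearIndependent K c := by
  let f : Fin k × Fin k → Fin k × Fin n := fun p => (p.1, Fin.castLE hkn p.2)
  have hf : Function.Injective f := fun p q h => by
    simp only [f, Prod.mk.injEq] at h
    exact Prod.ext h.1 (Fin.castLE_injective hkn h.2)
  refine ⟨rename f (Matrix.mvPolynomialX (Fin k) (Fin k) K).det,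
    (map_ne_zero_iff _ (rename_injective f hf)).mpr (Matrix.det_mvPolynomialX_ne_zero _ _),
    fun c hc => ?_⟩
  rw [eval_rename, Matrix.eval_det_mvPolynomialX] at hc
  exact .of_comp (LinearMap.funLeft K K (Fin.castLE hkn))
    (Matrix.linearIndependent_rows_of_det_ne_zero hc)

instance inst_s18 (n d : ℕ) : FiniteDimensional ℂ (formSpace n d) := by
  rw [formSpace, homogeneousSubmodule_eq_finsupp_supported,
    AddMonoidAlgebra.supported_eq_span_single]
  exact FiniteDimensional.span_of_finite ℂ
    (((Finsupp.finite_of_degree_le d).subset fun _ => le_of_eq).image _)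

theorem linForm_mem_formSpace_one {n : ℕ} (v : Fin n → ℂ) : linForm n v ∈ formSpace n 1 := by
  rw [formSpace, homogeneousSubmodule_one_eq_span_X]
  exact Submodule.sum_mem _ fun i _ => Submodule.smul_mem _ _ (Submodule.subset_span ⟨i, rfl⟩)

theorem linForm_add_smul_single {n : ℕ} (v : Fin n → ℂ) (t : ℂ) (j : Fin n) :
    linForm n (v + t • Pi.single j 1) = linForm n v + t • X j := by
  simp [linForm, add_smul, Finset.sum_add_distrib, Pi.single_apply, ite_smul]

theorem coeff_linForm {n : ℕ} (v : Fin n → ℂ) (j : Fin n) :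
    coeff (Finsupp.single j 1) (linForm n v) = v j := by
  simp [linForm, coeff_sum, coeff_X, Finsupp.single_left_inj]

theorem linearIndependent_linForm {n k : ℕ} {c : Fin k → Fin n → ℂ}
    (hc : LinearIndependent ℂ c) : LinearIndependent ℂ fun i => linForm n (c i) :=
  let coeffs : PolyR n →ₗ[ℂ] (Fin n → ℂ) := LinearMap.pi fun j => lcoeff ℂ (Finsupp.single j 1)
  have h : coeffs ∘ (fun i => linForm n (c i)) = c := by
    ext i j
    simp [coeffs, coeff_linForm]
  .of_comp coeffs (by rwa [h])

theorem linForm_pow_mul_monomial_mem_span {n d m : ℕ} {β : Fin n →₀ ℕ}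
    (hd : β.degree + m = d) (v : Fin n → ℂ) :
    linForm n v ^ m * monomial β 1 ∈ Submodule.span ℂ (Set.range fun v => linForm n v ^ d) := by
  set S := Submodule.span ℂ (Set.range fun v => linForm n v ^ d)
  induction hβ : β.degree generalizing β m v with
  | zero =>
    rw [(Finsupp.degree_eq_zero_iff β).mp hβ, monomial_zero', map_one, mul_one]
    rw [hβ, zero_add] at hd
    exact hd ▸ Submodule.subset_span ⟨v, rfl⟩
  | succ a ih =>
    obtain ⟨j, hj⟩ : ∃ j, β j ≠ 0 := by
      by_contra! h
      simp [show β = 0 from Finsupp.ext h] at hβ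
    set β' := β - Finsupp.single j 1
    have hβ' : β = β' + Finsupp.single j 1 :=
      (tsub_add_cancel_of_le (Finsupp.single_le_iff.mpr (Nat.one_le_iff_ne_zero.mpr hj))).symm
    have hdeg : β'.degree = a := by
      rw [hβ', map_add, Finsupp.degree_single] at hβ
      omega
    have key := S.mul_pow_mul_mem_of_forall_add_smul_pow_mul_mem (X j) (linForm n v)
      (monomial β' 1) m fun t => by
        have h := ih (m := m + 1) (by omega) (v + t • Pi.single j 1) hdeg
        rwa [linForm_add_smul_single] at h
    rw [hβ', monomial_add_single, pow_one]
    convert key using 1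
    ring

theorem formSpace_le_span_linForm_pow (n d : ℕ) :
    formSpace n d ≤ Submodule.span ℂ (Set.range fun v => linForm n v ^ d) := by
  rw [formSpace, homogeneousSubmodule_eq_finsupp_supported,
    AddMonoidAlgebra.supported_eq_span_single, Submodule.span_le]
  rintro _ ⟨β, hβ, rfl⟩
  simpa [single_eq_monomial] using
    linForm_pow_mul_monomial_mem_span (m := 0) (by rw [hβ.out, add_zero]) 0

theorem exists_eval_eq_linearMap_linForm_pow (n d : ℕ) (ψ : PolyR n →ₗ[ℂ] ℂ) :
    ∃ E : MvPolynomial (Fin n) ℂ, ∀ c, eval c E = ψ (linForm n c ^ d) := by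
  let L : MvPolynomial (Fin n) (MvPolynomial (Fin n) ℂ) := ∑ j, C (X j) * X j
  obtain ⟨E, hE⟩ := exists_eval_eq_linearMap_map_eval ψ (L ^ d)
  refine ⟨E, fun c => ?_⟩
  rw [hE, map_pow]
  congr 2
  simp [L, linForm, smul_eq_C_mul]

theorem exists_eval_eq_det_linForm_pow (n d k : ℕ) (ψ : PolyR n →ₗ[ℂ] (Fin k → ℂ)) :
    ∃ G : MvPolynomial (Fin k × Fin n) ℂ, ∀ c : Fin k → Fin n → ℂ,
      eval (fun p => c p.1 p.2) G = (Matrix.of fun i => ψ (linForm n (c i) ^ d)).det := by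
  choose E hE using fun t => exists_eval_eq_linearMap_linForm_pow n d (LinearMap.proj t ∘ₗ ψ)
  refine ⟨(Matrix.of fun i t => rename (Prod.mk i) (E t)).det, fun c => ?_⟩
  rw [RingHom.map_det]
  congr 1
  ext i t
  simp [eval_rename, Function.comp_def, hE]

theorem exists_det_linForm_pow_ne_zero {n d k : ℕ} {ψ : PolyR n →ₗ[ℂ] (Fin k → ℂ)}
    (hψ : (formSpace n d).map ψ = ⊤) :
    ∃ c : Fin k → Fin n → ℂ, (Matrix.of fun i => ψ (linForm n (c i) ^ d)).det ≠ 0 := by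
  have hspan : Submodule.span ℂ (Set.range fun v => ψ (linForm n v ^ d)) = ⊤ := by
    rw [Set.range_comp' ψ, ← Submodule.map_span, eq_top_iff, ← hψ]
    exact Submodule.map_mono (formSpace_le_span_linForm_pow n d)
  obtain ⟨w, hw, hdet⟩ := exists_det_ne_zero_of_span_eq_top hspan
  choose c hc using hw
  exact ⟨c, by simpa only [hc] using hdet⟩

theorem map_aeval_linForm_formSpace_le {n k : ℕ} (c : Fin k → Fin n → ℂ) (d : ℕ) :
    (formSpace k d).map (aeval fun i => linForm n (c i)).toLinearMap ≤ formSpace n d := by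
  rintro _ ⟨p, hp, rfl⟩
  refine (mem_homogeneousSubmodule d _).mpr ?_
  simpa using ((mem_homogeneousSubmodule d p).mp hp).aeval _
    fun i => (mem_homogeneousSubmodule 1 _).mp (linForm_mem_formSpace_one (c i))

theorem linForm_pow_mem_map_aeval {n k : ℕ} (c : Fin k → Fin n → ℂ) (d : ℕ) (i : Fin k) :
    linForm n (c i) ^ d ∈ (formSpace k d).map (aeval fun i => linForm n (c i)).toLinearMap :=
  ⟨X i ^ d, (mem_homogeneousSubmodule d _).mpr (isHomogeneous_X_pow i d), by simp⟩

theorem stmt18_general (n d k : ℕ) (hkn : k ≤ n)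
    (U : Submodule ℂ (PolyR n)) (hU : U ≤ formSpace n d)
    (hcodim : vcodim n d U = k) :
    ∃ P : MvPolynomial (Fin k × Fin n) ℂ, P ≠ 0 ∧
      ∀ c : Fin k → Fin n → ℂ,
        eval (fun p : Fin k × Fin n => c p.1 p.2) P ≠ 0 →
        LinearIndependent ℂ (fun i : Fin k => linForm n (c i)) ∧
        finrank ℂ (Submodule.map
            (MvPolynomial.aeval (fun i : Fin k => linForm n (c i))).toLinearMap
            (formSpace k d)) -
          finrank ℂ (U ⊓ Submodule.map
            (MvPolynomial.aeval (fun i : Fin k => linForm n (c i))).toLinearMap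
            (formSpace k d) : Submodule ℂ (PolyR n)) = k := by
  obtain ⟨ψ, hψF, hψU⟩ := Submodule.exists_linearMap_map_eq_top_ker_inf_eq hU hcodim
  obtain ⟨G, hG⟩ := exists_eval_eq_det_linForm_pow n d k ψ
  obtain ⟨Q, hQ0, hQ⟩ := exists_ne_zero_linearIndependent_of_eval_ne_zero ℂ hkn
  have hG0 : G ≠ 0 := by
    obtain ⟨c, hc⟩ := exists_det_linForm_pow_ne_zero hψF
    exact fun h => hc (by rw [← hG, h, map_zero])
  refine ⟨Q * G, mul_ne_zero hQ0 hG0, fun c hc => ?_⟩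
  rw [map_mul] at hc
  obtain ⟨hQc, hGc⟩ := mul_ne_zero_iff.mp hc
  rw [hG] at hGc
  refine ⟨linearIndependent_linForm (hQ c hQc), ?_⟩
  set W := (formSpace k d).map (aeval fun i => linForm n (c i)).toLinearMap
  have hWF : W ≤ formSpace n d := map_aeval_linForm_formSpace_le c d
  have hψW : (formSpace n d).map ψ ≤ W.map ψ := by
    rw [hψF, ← map_span_eq_top_of_det_ne_zero ψ _ hGc]
    exact Submodule.map_mono
      (Submodule.span_le.mpr (Set.range_subset_iff.mpr (linForm_pow_mem_map_aeval c d)))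
  rw [Submodule.finrank_sub_finrank_inf_eq_of_le_sup hU hWF
    (Submodule.le_sup_of_map_le_map hWF hψU hψW)]
  exact hcodim

theorem stmt18 (n d k : ℕ) (hn : 2 ≤ n) (hd : 2 ≤ d) (hkn : k ≤ n)
    (U : Submodule ℂ (PolyR n)) (hU : U ≤ formSpace n d)
    (hcodim : vcodim n d U = k) :
    ∃ P : MvPolynomial (Fin k × Fin n) ℂ, P ≠ 0 ∧
      ∀ c : Fin k → Fin n → ℂ,
        eval (fun p : Fin k × Fin n => c p.1 p.2) P ≠ 0 →
        LinearIndependent ℂ (fun i : Fin k => linForm n (c i)) ∧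
        finrank ℂ (Submodule.map
            (MvPolynomial.aeval (fun i : Fin k => linForm n (c i))).toLinearMap
            (formSpace k d)) -
          finrank ℂ (U ⊓ Submodule.map
            (MvPolynomial.aeval (fun i : Fin k => linForm n (c i))).toLinearMap
            (formSpace k d) : Submodule ℂ (PolyR n)) = k :=
  stmt18_general n d k hkn U hU hcodim
end
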